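/- arXiv:2405.01254 — 9 statements merged into one kernel-verified Lean document; each statement's English description precedes it below -/
import Mathlib

section
/- For every γ ≥ 1 and every positive integer n, the n-dimensional Lebesgue measure of the set E_{n,γ} = {x ∈ ℝⁿ : Σ|x_j| + |1 − Σx_j| ≤ γ} equals χ_n(γ)/n!, where χ_n is the standardized Legendre polynomial of degree n. -/
open MeasureTheory Finset Polynomial

noncomputable def legendre (n : ℕ) : ℝ → ℝ := fun t =>
  (1 / (2 ^ n * (Nat.factorial n) : ℝ)) *
    iteratedDeriv n (fun s : ℝ => (s ^ 2 - 1) ^ n) t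

noncomputable def pPoly (n : ℕ) (u v : ℝ) : ℝ :=
  ∑ k ∈ range (n + 1), (n.choose k : ℝ) ^ 2 * u ^ k * v ^ (n - k)

lemma pPoly_nonneg {n : ℕ} {u v : ℝ} (hu : 0 ≤ u) (hv : 0 ≤ v) : 0 ≤ pPoly n u v :=
  Finset.sum_nonneg fun k _ => by positivity

lemma pPoly_cont {f g : ℝ → ℝ} (hf : Continuous f) (hg : Continuous g) (n : ℕ) :
    Continuous fun t => pPoly n (f t) (g t) := by
  simp only [pPoly]
  exact continuous_finset_sum _ fun k _ =>
    (continuous_const.mul (hf.pow k)).mul (hg.pow (n - k))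

lemma integral_pPoly_left (n : ℕ) (u v : ℝ) :
    ∫ x in (0:ℝ)..u, pPoly n x v
      = ∑ k ∈ range (n+1), (n.choose k : ℝ)^2 / (k+1) * (u^(k+1) * v^(n-k)) := by
  have h : ∀ x : ℝ, pPoly n x v
      = ∑ k ∈ range (n+1), ((n.choose k : ℝ)^2 * v^(n-k)) * x^k := by
    intro x; rw [pPoly]; exact Finset.sum_congr rfl fun k _ => by ring
  simp_rw [h]
  rw [intervalIntegral.integral_finset_sum]
  · refine Finset.sum_congr rfl fun k _ => ?_
    rw [intervalIntegral.integral_const_mul, integral_pow]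
    ring
  · intro k _
    exact (continuous_const.mul (continuous_pow k)).intervalIntegrable _ _

lemma integral_pPoly_right (n : ℕ) (u v : ℝ) :
    ∫ x in (0:ℝ)..v, pPoly n u x
      = ∑ k ∈ range (n+1), (n.choose k : ℝ)^2 / (k+1) * (v^(k+1) * u^(n-k)) := by
  have h : ∀ x : ℝ, pPoly n u x
      = ∑ k ∈ range (n+1), ((n.choose k : ℝ)^2 * u^k) * x^(n-k) := fun x => rfl
  simp_rw [h]
  rw [intervalIntegral.integral_finset_sum]
  · rw [← Finset.sum_range_reflect]
    refine Finset.sum_congr rfl fun k hk => ?_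
    have hk' : k ≤ n := by simpa using Nat.lt_succ_iff.mp (Finset.mem_range.mp hk)
    have e1 : n + 1 - 1 - k = n - k := by omega
    have e2 : n - (n - k) = k := by omega
    rw [e1, e2, Nat.choose_symm hk', intervalIntegral.integral_const_mul, integral_pow]
    push_cast
    ring
  · intro k _
    exact (continuous_const.mul (continuous_pow (n-k))).intervalIntegrable _ _

lemma key_frac (n j : ℕ) (hj : j ≤ n + 1) :
    ((n+1).choose j : ℝ) ^ 2 / (n+1) =
      (if j = 0 then 0 else (n.choose (j-1) : ℝ) ^ 2 / j)
        + (n.choose j : ℝ) ^ 2 / ((n + 1 - j : ℕ) : ℝ) := by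
  rcases Nat.eq_zero_or_pos j with rfl | hj0
  · simp
  obtain ⟨i, rfl⟩ : ∃ i, j = i + 1 := ⟨j - 1, by omega⟩
  rw [if_neg (Nat.succ_ne_zero i)]
  rcases eq_or_lt_of_le hj with heq | hjn
  · have hi : i = n := by omega
    subst hi
    simp [Nat.choose_self, Nat.choose_eq_zero_of_lt (Nat.lt_succ_self i), Nat.sub_self,
      Nat.add_sub_cancel]
  · have hin : i < n := by omega
    have hsub : n + 1 - (i + 1) = n - i := by omega
    have hsub1 : i + 1 - 1 = i := by omega
    rw [hsub, hsub1]
    have nat1 : (i+1) * ((n+1).choose (i+1)) = (n+1) * n.choose i := by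
      rw [mul_comm]; exact (Nat.add_one_mul_choose_eq n i).symm
    have nat2 : (n - i) * ((n+1).choose (i+1)) = (n+1) * n.choose (i+1) := by
      have h1 := Nat.add_one_mul_choose_eq n (i+1)
      have h2 := Nat.choose_succ_right_eq (n+1) (i+1)
      have hs : n + 1 - (i+1) = n - i := by omega
      rw [hs] at h2
      rw [mul_comm]
      rw [show (n+1) * n.choose (i+1) = n.succ * n.choose (i+1) from rfl, h1]
      exact h2.symm ▸ rfl
    have rc1 : ((i:ℝ)+1) * ((n+1).choose (i+1) : ℝ) = ((n:ℝ)+1) * (n.choose i : ℝ) := by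
      exact_mod_cast nat1
    have rc2 : ((n - i : ℕ) : ℝ) * ((n+1).choose (i+1) : ℝ)
        = ((n:ℝ)+1) * (n.choose (i+1) : ℝ) := by
      exact_mod_cast nat2
    have rc3 : (((n+1).choose (i+1) : ℕ) : ℝ) = (n.choose i : ℝ) + (n.choose (i+1) : ℝ) := by
      exact_mod_cast Nat.choose_succ_succ n i
    have hn1 : ((n:ℝ)+1) ≠ 0 := by positivity
    have hJ : ((i : ℝ) + 1) ≠ 0 := by positivity
    have hM : ((n - i : ℕ) : ℝ) ≠ 0 := by
      have : 0 < n - i := by omega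
      positivity
    push_cast
    rw [div_add_div _ _ hJ hM, div_eq_div_iff hn1 (mul_ne_zero hJ hM)]
    linear_combination (((n-i:ℕ):ℝ) * ((n+1).choose (i+1) : ℝ) - ((n-i:ℕ):ℝ) * (n.choose (i+1):ℝ)) * rc1
      + ((i:ℝ)+1) * (n.choose (i+1):ℝ) * rc2
      + ((n:ℝ)+1) * ((n-i:ℕ):ℝ) * (n.choose i : ℝ) * rc3

lemma sum_identity (n : ℕ) (u v : ℝ) :
    (∑ k ∈ range (n+1), (n.choose k : ℝ)^2 / (k+1) * (u^(k+1) * v^(n-k)))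
      + (∑ k ∈ range (n+1), (n.choose k : ℝ)^2 / (k+1) * (v^(k+1) * u^(n-k)))
      = pPoly (n+1) u v / (n+1) := by
  have step1 : pPoly (n+1) u v / (n+1)
      = ∑ j ∈ range (n+2), ((n+1).choose j : ℝ)^2 / ((n:ℝ)+1) * (u^j * v^(n+1-j)) := by
    rw [pPoly, Finset.sum_div]
    exact Finset.sum_congr rfl fun j _ => by push_cast; ring
  rw [step1]
  have step2 : ∀ j ∈ range (n+2),
      ((n+1).choose j : ℝ)^2 / ((n:ℝ)+1) * (u^j * v^(n+1-j))
      = (if j = 0 then 0 else (n.choose (j-1) : ℝ)^2 / j) * (u^j * v^(n+1-j))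
        + (n.choose j : ℝ)^2 / ((n + 1 - j : ℕ) : ℝ) * (u^j * v^(n+1-j)) := by
    intro j hj
    rw [← add_mul, ← key_frac n j (by simpa using Nat.lt_succ_iff.mp (Finset.mem_range.mp hj))]
  rw [Finset.sum_congr rfl step2, Finset.sum_add_distrib]
  congr 1
  · symm
    rw [Finset.sum_range_succ']
    norm_num
    refine Finset.sum_congr rfl fun k hk => ?_
    have h4 : n + 1 - (k + 1) = n - k := by omega
    rw [h4]
  · symm
    rw [Finset.sum_range_succ, ← Finset.sum_range_reflect]
    have hz : n.choose (n+1) = 0 := Nat.choose_eq_zero_of_lt (Nat.lt_succ_self n)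
    simp only [hz, Nat.cast_zero, ne_eq, zero_pow, zero_div, zero_mul, add_zero]
    norm_num
    refine Finset.sum_congr rfl fun k hk => ?_
    have hk' : k ≤ n := by simpa using Nat.lt_succ_iff.mp (Finset.mem_range.mp hk)
    have e2 : n + 1 - (n - k) = k + 1 := by omega
    rw [e2, Nat.choose_symm hk']
    push_cast
    ring

lemma iteratedDeriv_polyeval (P : ℝ[X]) (n : ℕ) :
    iteratedDeriv n (fun s => P.eval s) = fun s => (derivative^[n] P).eval s := by
  induction n with
  | zero => simp
  | succ n ih =>
    rw [iteratedDeriv_succ, ih, Function.iterate_succ_apply']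
    funext s
    exact Polynomial.deriv _

lemma choose_desc_desc (n i : ℕ) (hi : i ≤ n) :
    (n.choose i) * (n.descFactorial (n - i) * n.descFactorial i) =
      n.factorial * (n.choose i) ^ 2 := by
  rw [Nat.descFactorial_eq_factorial_mul_choose n (n-i), Nat.descFactorial_eq_factorial_mul_choose n i,
    Nat.choose_symm hi]
  have := Nat.choose_mul_factorial_mul_factorial hi
  ring_nf
  nlinarith [this]

lemma legendre_eq_pPoly (n : ℕ) (t : ℝ) :
    legendre n t = pPoly n ((t + 1) / 2) ((t - 1) / 2) := by
  have hfun : (fun s : ℝ => (s ^ 2 - 1) ^ n) =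
      fun s => (((X - C 1) ^ n * (X + C 1) ^ n : ℝ[X])).eval s := by
    funext s; simp [← mul_pow]; ring_nf
  rw [legendre, hfun, iteratedDeriv_polyeval]
  rw [Polynomial.iterate_derivative_mul]
  simp only [Polynomial.iterate_derivative_X_sub_pow, Polynomial.iterate_derivative_X_add_pow,
    smul_smul, Polynomial.eval_finset_sum, nsmul_eq_mul, Polynomial.eval_mul,
    Polynomial.eval_natCast, Polynomial.eval_pow, Polynomial.eval_sub, Polynomial.eval_add,
    Polynomial.eval_X, Polynomial.eval_one, Polynomial.eval_C]
  rw [pPoly, ← Finset.sum_range_reflect, Finset.mul_sum]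
  refine Finset.sum_congr rfl fun k hk => ?_
  have hk' : k ≤ n := by simpa using Nat.lt_succ_iff.mp (Finset.mem_range.mp hk)
  have h1 : n + 1 - 1 - k = n - k := by omega
  have h2 : n - (n - k) = k := by omega
  have h3 : n.choose (n - k) = n.choose k := Nat.choose_symm hk'
  rw [h1, h2, h3]
  have hcast : ((n.choose k : ℝ)) * ((n.descFactorial (n-k) : ℝ) * (n.descFactorial k : ℝ)) =
      (n.factorial : ℝ) * (n.choose k : ℝ) ^ 2 := by
    exact_mod_cast congrArg (Nat.cast : ℕ → ℝ) (choose_desc_desc n k hk')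
  have h2pow : (2:ℝ) ^ (n - k) * 2 ^ k = 2 ^ n := by
    rw [← pow_add]; congr 1; omega
  have hfac : (n.factorial : ℝ) ≠ 0 := by exact_mod_cast n.factorial_ne_zero
  have h2n : (2:ℝ) ^ n ≠ 0 := by positivity
  simp only [div_pow]
  field_simp [div_pow]
  rw [← h2pow]
  linear_combination (2:ℝ)^k * 2^(n-k) * (t-1)^(n-k) * (t+1)^k * hcast

def Eset (n : ℕ) (a γ : ℝ) : Set (Fin n → ℝ) :=
  {x | (∑ j, |x j|) + |a - ∑ j, x j| ≤ γ}

lemma measurableSet_Eset (n : ℕ) (a γ : ℝ) : MeasurableSet (Eset n a γ) := by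
  have hm : Measurable fun x : Fin n → ℝ => (∑ j, |x j|) + |a - ∑ j, x j| := by
    apply Measurable.add
    · exact Finset.measurable_sum _ fun j _ => (measurable_pi_apply j).abs
    · exact (measurable_const.sub (Finset.measurable_sum _ fun j _ => measurable_pi_apply j)).abs
  exact hm measurableSet_Iic

lemma Eset_zero (a γ : ℝ) :
    volume (Eset 0 a γ) = if |a| ≤ γ then 1 else 0 := by
  rcases le_or_gt |a| γ with h | h
  · rw [if_pos h]
    have h2 : Eset 0 a γ = Set.univ := by
      ext x; simp [Eset, h]
    rw [h2, MeasureTheory.volume_pi, MeasureTheory.Measure.pi_univ]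
    simp
  · rw [if_neg (not_le.mpr h)]
    have h2 : Eset 0 a γ = ∅ := by
      ext x; simp [Eset]; linarith
    simp [h2]

lemma Eset_succ (n : ℕ) (a γ : ℝ) :
    volume (Eset (n+1) a γ) = ∫⁻ t : ℝ, volume (Eset n (a - t) (γ - |t|)) := by
  have hmp := MeasureTheory.volume_preserving_piFinSuccAbove (fun _ : Fin (n+1) => ℝ) 0
  set e := MeasurableEquiv.piFinSuccAbove (fun _ : Fin (n+1) => ℝ) 0 with he
  set S : Set (ℝ × (Fin n → ℝ)) :=
    {p | (∑ j, |p.2 j|) + |(a - p.1) - ∑ j, p.2 j| ≤ γ - |p.1|} with hS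
  have hSm : MeasurableSet S := by
    have hm : Measurable fun p : ℝ × (Fin n → ℝ) =>
        ((∑ j, |p.2 j|) + |(a - p.1) - ∑ j, p.2 j|) - (γ - |p.1|) := by
      apply Measurable.sub
      · apply Measurable.add
        · exact Finset.measurable_sum _ fun j _ => ((measurable_pi_apply j).comp measurable_snd).abs
        · exact ((measurable_const.sub measurable_fst).sub
            (Finset.measurable_sum _ fun j _ => (measurable_pi_apply j).comp measurable_snd)).abs
      · exact measurable_const.sub measurable_fst.abs
    have h2 : S = (fun p : ℝ × (Fin n → ℝ) =>
        ((∑ j, |p.2 j|) + |(a - p.1) - ∑ j, p.2 j|) - (γ - |p.1|)) ⁻¹' Set.Iic 0 := by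
      ext p; simp [hS, sub_nonpos]
    rw [h2]
    exact hm measurableSet_Iic
  have hpre : Eset (n+1) a γ = e ⁻¹' S := by
    ext x
    simp only [Eset, Set.mem_setOf_eq, Set.mem_preimage, hS, he,
      MeasurableEquiv.piFinSuccAbove_apply, Fin.insertNthEquiv_zero,
      Fin.consEquiv_symm_apply, Fin.tail]
    rw [Fin.sum_univ_succ (fun j => |x j|), Fin.sum_univ_succ x]
    have harg : a - x 0 - ∑ j : Fin n, x j.succ
        = a - (x 0 + ∑ j : Fin n, x j.succ) := by ring
    rw [harg]
    constructor <;> intro h <;> linarith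
  rw [hpre, hmp.measure_preimage hSm.nullMeasurableSet]
  rw [MeasureTheory.Measure.volume_eq_prod, MeasureTheory.Measure.prod_apply hSm]
  rfl

lemma Eset_volume (n : ℕ) : ∀ a γ : ℝ, volume (Eset n a γ)
    = ENNReal.ofReal (if |a| ≤ γ then
        pPoly n ((γ + a)/2) ((γ - a)/2) / (Nat.factorial n : ℝ) else 0) := by
  induction n with
  | zero =>
    intro a γ
    rw [Eset_zero]
    split_ifs with h
    · simp [pPoly]
    · simp
  | succ n ih =>
    intro a γ
    rw [Eset_succ]
    simp_rw [ih]
    rcases le_or_gt |a| γ with hγ | hγ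
    · rw [if_pos hγ]
      have habs := abs_le.mp hγ
      set u₀ : ℝ := (γ + a)/2 with hu
      set v₀ : ℝ := (γ - a)/2 with hv
      have hu0 : 0 ≤ u₀ := by rw [hu]; linarith [habs.1]
      have hv0 : 0 ≤ v₀ := by rw [hv]; linarith [habs.2]
      have hle : -v₀ ≤ u₀ := by linarith
      set h : ℝ → ℝ := fun t =>
        pPoly n ((γ - |t| + (a - t))/2) ((γ - |t| - (a - t))/2) / (Nat.factorial n : ℝ) with hh
      have hcond : ∀ t : ℝ, (|a - t| ≤ γ - |t|) ↔ (-v₀ ≤ t ∧ t ≤ u₀) := by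
        intro t
        constructor
        · intro hc
          have e1 := (abs_le.mp hc).1
          have e2 := (abs_le.mp hc).2
          have e3 : -t ≤ |t| := neg_le_abs t
          have e4 : t ≤ |t| := le_abs_self t
          constructor
          · rw [hv]; linarith
          · rw [hu]; linarith
        · rintro ⟨hl, hr⟩
          rw [hu] at hr; rw [hv] at hl
          rw [abs_le]
          rcases abs_cases t with ⟨h1, h2⟩ | ⟨h1, h2⟩ <;> rw [h1] <;>
            constructor <;> linarith
      have hIcc : ∀ t : ℝ,
          (if |a - t| ≤ γ - |t| then
            pPoly n ((γ - |t| + (a - t))/2) ((γ - |t| - (a - t))/2) / (Nat.factorial n : ℝ)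
          else 0) = Set.indicator (Set.Icc (-v₀) u₀) h t := by
        intro t
        by_cases hmem : -v₀ ≤ t ∧ t ≤ u₀
        · rw [if_pos ((hcond t).mpr hmem), Set.indicator_of_mem (Set.mem_Icc.mpr hmem)]
        · rw [if_neg (fun hc => hmem ((hcond t).mp hc)),
            Set.indicator_of_notMem (fun hc => hmem (Set.mem_Icc.mp hc))]
      simp_rw [hIcc]
      have hcont : Continuous h := by
        apply Continuous.div_const
        exact pPoly_cont (by fun_prop) (by fun_prop) n
      have hInt : Integrable (Set.indicator (Set.Icc (-v₀) u₀) h) volume :=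
        (hcont.integrableOn_Icc).integrable_indicator measurableSet_Icc
      have hnn : 0 ≤ᵐ[volume] Set.indicator (Set.Icc (-v₀) u₀) h := by
        refine Filter.Eventually.of_forall ?_
        refine Set.indicator_nonneg fun t ht => ?_
        have hc := (hcond t).mpr (Set.mem_Icc.mp ht)
        have e1 := (abs_le.mp hc).1
        have e2 := (abs_le.mp hc).2
        have hud : 0 ≤ (γ - |t| + (a - t))/2 := by linarith
        have hvd : 0 ≤ (γ - |t| - (a - t))/2 := by linarith
        rw [hh]
        have := pPoly_nonneg (n := n) hud hvd
        positivity
      rw [← MeasureTheory.ofReal_integral_eq_lintegral_ofReal hInt hnn]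
      congr 1
      rw [MeasureTheory.integral_indicator measurableSet_Icc]
      have hIccIoc : ∫ t in Set.Icc (-v₀) u₀, h t = ∫ t in (-v₀)..u₀, h t := by
        rw [intervalIntegral.integral_of_le hle, MeasureTheory.integral_Icc_eq_integral_Ioc]
      rw [hIccIoc]
      rw [← intervalIntegral.integral_add_adjacent_intervals (a := -v₀) (b := 0) (c := u₀)
        (hcont.intervalIntegrable _ _) (hcont.intervalIntegrable _ _)]
      have hleft : ∫ t in (-v₀)..(0:ℝ), h t
          = ∫ t in (-v₀)..(0:ℝ), pPoly n u₀ (t + v₀) / (Nat.factorial n : ℝ) := by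
        refine intervalIntegral.integral_congr fun t ht => ?_
        rw [Set.uIcc_of_le (by linarith : -v₀ ≤ (0:ℝ))] at ht
        obtain ⟨ht1, ht2⟩ := Set.mem_Icc.mp ht
        rw [hh]
        simp only
        rw [abs_of_nonpos ht2,
          show (γ - -t + (a - t))/2 = u₀ by rw [hu]; ring,
          show (γ - -t - (a - t))/2 = t + v₀ by rw [hv]; ring]
      have hright : ∫ t in (0:ℝ)..u₀, h t
          = ∫ t in (0:ℝ)..u₀, pPoly n (u₀ - t) v₀ / (Nat.factorial n : ℝ) := by
        refine intervalIntegral.integral_congr fun t ht => ?_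
        rw [Set.uIcc_of_le hu0] at ht
        obtain ⟨ht1, ht2⟩ := Set.mem_Icc.mp ht
        rw [hh]
        simp only
        rw [abs_of_nonneg ht1,
          show (γ - t + (a - t))/2 = u₀ - t by rw [hu]; ring,
          show (γ - t - (a - t))/2 = v₀ by rw [hv]; ring]
      rw [hleft, hright]
      simp_rw [div_eq_mul_inv]
      rw [intervalIntegral.integral_mul_const, intervalIntegral.integral_mul_const]
      rw [intervalIntegral.integral_comp_add_right (fun s => pPoly n u₀ s) v₀]
      rw [intervalIntegral.integral_comp_sub_left (fun s => pPoly n s v₀) u₀]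
      rw [neg_add_cancel, zero_add, sub_self, sub_zero]
      rw [integral_pPoly_right, integral_pPoly_left]
      rw [← add_mul]
      rw [show (∑ k ∈ range (n+1), (n.choose k : ℝ)^2 / (k+1) * (v₀^(k+1) * u₀^(n-k)))
          + (∑ k ∈ range (n+1), (n.choose k : ℝ)^2 / (k+1) * (u₀^(k+1) * v₀^(n-k)))
          = pPoly (n+1) u₀ v₀ / (n+1) from by
        rw [add_comm]; exact sum_identity n u₀ v₀]
      rw [Nat.factorial_succ]
      push_cast
      field_simp
    · rw [if_neg (not_le.mpr hγ)]
      have hzero : ∀ t : ℝ, ¬(|a - t| ≤ γ - |t|) := by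
        intro t hc
        have h1 : |a| ≤ |a - t| + |t| := by
          calc |a| = |(a - t) + t| := by ring_nf
          _ ≤ |a - t| + |t| := abs_add_le _ _
        linarith
      simp [hzero]

theorem measure_E_eq_legendre (n : ℕ) (hn : 1 ≤ n) (γ : ℝ) (hγ : 1 ≤ γ) :
    volume {x : Fin n → ℝ | (∑ j, |x j|) + |1 - ∑ j, x j| ≤ γ}
      = ENNReal.ofReal (legendre n γ / (Nat.factorial n : ℝ)) := by
  have h := Eset_volume n 1 γ
  have habs : |(1:ℝ)| ≤ γ := by rw [abs_one]; exact hγ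
  rw [show {x : Fin n → ℝ | (∑ j, |x j|) + |1 - ∑ j, x j| ≤ γ} = Eset n 1 γ from rfl,
    h, if_pos habs, legendre_eq_pPoly]
end

section
/- For every γ ≥ 1 and positive integer n, the n-dimensional Lebesgue measure of E_{n,γ} equals (1/(2ⁿ n!)) Σ_{i=0}^{n} C(n,i)² (γ−1)^{n−i} (γ+1)^{i}. -/
open MeasureTheory

lemma simplex_vol_fin (n : ℕ) : ∀ (c : ℝ), 0 ≤ c →
    volume {y : Fin n → ℝ | (∀ i, 0 ≤ y i) ∧ ∑ i, y i ≤ c}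
      = ENNReal.ofReal (c ^ n / n.factorial) := by
  induction n with
  | zero =>
    intro c hc
    have h : {y : Fin 0 → ℝ | (∀ i, 0 ≤ y i) ∧ ∑ i, y i ≤ c} = Set.univ := by
      ext y; simp [hc]
    rw [h]
    simp [volume_pi, Measure.pi_univ]
  | succ n ih =>
    intro c hc
    set T : Set (ℝ × (Fin n → ℝ)) :=
      {p | 0 ≤ p.1 ∧ (∀ i, 0 ≤ p.2 i) ∧ p.1 + ∑ i, p.2 i ≤ c} with hT
    have hTm : MeasurableSet T := by
      have h1 : MeasurableSet {p : ℝ × (Fin n → ℝ) | 0 ≤ p.1} :=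
        measurableSet_le measurable_const measurable_fst
      have h2 : MeasurableSet {p : ℝ × (Fin n → ℝ) | ∀ i, 0 ≤ p.2 i} := by
        rw [Set.setOf_forall]
        exact MeasurableSet.iInter fun i =>
          measurableSet_le measurable_const measurable_snd.eval
      have h3 : MeasurableSet {p : ℝ × (Fin n → ℝ) | p.1 + ∑ i, p.2 i ≤ c} :=
        measurableSet_le (by fun_prop) measurable_const
      rw [hT]
      simp only [Set.setOf_and]
      exact h1.inter (h2.inter h3)
    have hpre : {y : Fin (n+1) → ℝ | (∀ i, 0 ≤ y i) ∧ ∑ i, y i ≤ c}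
        = (MeasurableEquiv.piFinSuccAbove (fun _ => ℝ) 0) ⁻¹' T := by
      ext y
      simp only [Set.mem_preimage, MeasurableEquiv.piFinSuccAbove, MeasurableEquiv.coe_mk,
        Fin.insertNthEquiv_symm_apply, Fin.removeNth, hT, Set.mem_setOf_eq]
      constructor
      · rintro ⟨h1, h2⟩
        refine ⟨h1 0, fun i => h1 _, ?_⟩
        rw [Fin.sum_univ_succ] at h2
        simpa [Fin.tail] using h2
      · rintro ⟨h1, h2, h3⟩
        constructor
        · intro i
          rcases Fin.eq_zero_or_eq_succ i with rfl | ⟨j, rfl⟩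
          · exact h1
          · simpa [Fin.tail] using h2 j
        · rwa [Fin.sum_univ_succAbove y 0]
    rw [hpre, (volume_preserving_piFinSuccAbove (fun _ => ℝ) 0).measure_preimage
      hTm.nullMeasurableSet]
    rw [Measure.volume_eq_prod, Measure.prod_apply hTm]
    have hslice : ∀ t : ℝ, volume (Prod.mk t ⁻¹' T) =
        Set.indicator (Set.Icc 0 c)
          (fun t => ENNReal.ofReal ((c - t) ^ n / n.factorial)) t := by
      intro t
      by_cases ht : t ∈ Set.Icc 0 c
      · rw [Set.indicator_of_mem ht]
        have h2 : Prod.mk t ⁻¹' T = {y : Fin n → ℝ | (∀ i, 0 ≤ y i) ∧ ∑ i, y i ≤ c - t} := by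
          ext y
          simp only [hT, Set.mem_preimage, Set.mem_setOf_eq]
          constructor
          · rintro ⟨_, h2, h3⟩; exact ⟨h2, by linarith⟩
          · rintro ⟨h2, h3⟩; exact ⟨ht.1, h2, by linarith⟩
        rw [h2, ih (c - t) (by linarith [ht.2])]
      · rw [Set.indicator_of_notMem ht]
        have h2 : Prod.mk t ⁻¹' T = ∅ := by
          ext y
          simp only [hT, Set.mem_preimage, Set.mem_setOf_eq, Set.mem_empty_iff_false, iff_false]
          rintro ⟨h1, h2, h3⟩
          have : (0:ℝ) ≤ ∑ i, y i := Finset.sum_nonneg fun i _ => h2 i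
          exact ht ⟨h1, by linarith⟩
        simp [h2]
    simp_rw [hslice]
    rw [lintegral_indicator measurableSet_Icc]
    have hcont : Continuous fun t : ℝ => (c - t) ^ n / n.factorial :=
      ((continuous_const.sub continuous_id).pow n).div_const _
    rw [← ofReal_integral_eq_lintegral_ofReal
      (hcont.integrableOn_Icc.mono_measure le_rfl |>.mono_set subset_rfl)
      (ae_restrict_of_forall_mem measurableSet_Icc fun t ht =>
        div_nonneg (pow_nonneg (by linarith [ht.2]) n) (Nat.cast_nonneg _))]
    congr 1
    rw [MeasureTheory.integral_Icc_eq_integral_Ioc, ← intervalIntegral.integral_of_le hc]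
    have : ∫ t in (0:ℝ)..c, (c - t) ^ n / n.factorial
        = (∫ t in (0:ℝ)..c, (c - t) ^ n) / n.factorial := by
      rw [intervalIntegral.integral_div]
    rw [this, intervalIntegral.integral_comp_sub_left (fun x => x ^ n) c]
    simp only [sub_self, sub_zero, integral_pow]
    rw [Nat.factorial_succ]
    have hnf : (n.factorial : ℝ) ≠ 0 := Nat.cast_ne_zero.mpr n.factorial_ne_zero
    field_simp
    rw [zero_pow (Nat.succ_ne_zero n)]
    push_cast
    ring

lemma simplex_meas {ι : Type} [Fintype ι] (c : ℝ) :
    MeasurableSet {y : ι → ℝ | (∀ i, 0 ≤ y i) ∧ ∑ i, y i ≤ c} := by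
  simp only [Set.setOf_and]
  refine MeasurableSet.inter ?_ (measurableSet_le (by fun_prop) measurable_const)
  rw [Set.setOf_forall]
  exact MeasurableSet.iInter fun i =>
    measurableSet_le measurable_const (measurable_pi_apply i)

lemma simplex_meas_pos {ι : Type} [Fintype ι] (c : ℝ) :
    MeasurableSet {y : ι → ℝ | (∀ i, 0 < y i) ∧ ∑ i, y i ≤ c} := by
  simp only [Set.setOf_and]
  refine MeasurableSet.inter ?_ (measurableSet_le (by fun_prop) measurable_const)
  rw [Set.setOf_forall]
  exact MeasurableSet.iInter fun i =>
    measurableSet_lt measurable_const (measurable_pi_apply i)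

lemma simplex_vol {ι : Type} [Fintype ι] (c : ℝ) (hc : 0 ≤ c) :
    volume {y : ι → ℝ | (∀ i, 0 ≤ y i) ∧ ∑ i, y i ≤ c}
      = ENNReal.ofReal (c ^ Fintype.card ι / (Fintype.card ι).factorial) := by
  classical
  set e : Fin (Fintype.card ι) ≃ ι := (Fintype.equivFin ι).symm with he
  have hmp := volume_measurePreserving_piCongrLeft (fun _ : ι => ℝ) e
  rw [← hmp.measure_preimage (simplex_meas c).nullMeasurableSet]
  have hpre : (MeasurableEquiv.piCongrLeft (fun _ : ι => ℝ) e) ⁻¹'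
      {y : ι → ℝ | (∀ i, 0 ≤ y i) ∧ ∑ i, y i ≤ c}
      = {g : Fin (Fintype.card ι) → ℝ | (∀ j, 0 ≤ g j) ∧ ∑ j, g j ≤ c} := by
    ext g
    simp only [Set.mem_preimage, Set.mem_setOf_eq, MeasurableEquiv.coe_piCongrLeft]
    have happ : ∀ j, (Equiv.piCongrLeft (fun _ : ι => ℝ) e) g (e j) = g j := fun j =>
      Equiv.piCongrLeft_apply_apply (fun _ : ι => ℝ) e g j
    have hsum : ∑ i : ι, (Equiv.piCongrLeft (fun _ : ι => ℝ) e) g i = ∑ j, g j :=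
      (Fintype.sum_equiv e (fun j => g j)
        (fun i => (Equiv.piCongrLeft (fun _ : ι => ℝ) e) g i)
        (fun j => (happ j).symm)).symm
    rw [hsum]
    constructor
    · rintro ⟨h1, h2⟩
      exact ⟨fun j => by rw [← happ j]; exact h1 _, h2⟩
    · rintro ⟨h1, h2⟩
      refine ⟨fun i => ?_, h2⟩
      have := h1 (e.symm i)
      rwa [← happ (e.symm i), e.apply_symm_apply] at this
  rw [hpre, simplex_vol_fin _ c hc]

lemma simplex_vol_pos {ι : Type} [Fintype ι] (c : ℝ) (hc : 0 ≤ c) :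
    volume {y : ι → ℝ | (∀ i, 0 < y i) ∧ ∑ i, y i ≤ c}
      = ENNReal.ofReal (c ^ Fintype.card ι / (Fintype.card ι).factorial) := by
  rw [← simplex_vol c hc]
  apply le_antisymm
  · exact measure_mono fun y hy => ⟨fun i => (hy.1 i).le, hy.2⟩
  · have hsub : {y : ι → ℝ | (∀ i, 0 ≤ y i) ∧ ∑ i, y i ≤ c}
        ⊆ {y : ι → ℝ | (∀ i, 0 < y i) ∧ ∑ i, y i ≤ c} ∪ ⋃ i, {y : ι → ℝ | y i = 0} := by
      intro y hy
      by_cases h : ∀ i, 0 < y i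
      · exact Or.inl ⟨h, hy.2⟩
      · push_neg at h
        obtain ⟨i, hi⟩ := h
        exact Or.inr (Set.mem_iUnion.mpr ⟨i, le_antisymm hi (hy.1 i)⟩)
    calc volume {y : ι → ℝ | (∀ i, 0 ≤ y i) ∧ ∑ i, y i ≤ c}
        ≤ volume ({y : ι → ℝ | (∀ i, 0 < y i) ∧ ∑ i, y i ≤ c}
            ∪ ⋃ i, {y : ι → ℝ | y i = 0}) := measure_mono hsub
      _ ≤ volume {y : ι → ℝ | (∀ i, 0 < y i) ∧ ∑ i, y i ≤ c}
            + volume (⋃ i, {y : ι → ℝ | y i = 0}) := measure_union_le _ _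
      _ = volume {y : ι → ℝ | (∀ i, 0 < y i) ∧ ∑ i, y i ≤ c} := by
          have h0 : volume (⋃ i, {y : ι → ℝ | y i = 0}) = 0 :=
            measure_iUnion_null fun i => by
              rw [volume_pi]; exact Measure.pi_hyperplane _ i 0
          rw [h0, add_zero]

lemma simplex_vol_neg {ι : Type} [Fintype ι] (c : ℝ) (hc : 0 ≤ c) :
    volume {y : ι → ℝ | (∀ i, y i < 0) ∧ ∑ i, -y i ≤ c}
      = ENNReal.ofReal (c ^ Fintype.card ι / (Fintype.card ι).factorial) := by
  have hmp : MeasurePreserving (fun (y : ι → ℝ) (i : ι) => -(y i)) volume volume :=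
    volume_preserving_pi fun _ => Measure.measurePreserving_neg _
  have hpre : (fun (y : ι → ℝ) (i : ι) => -(y i)) ⁻¹'
      {y : ι → ℝ | (∀ i, 0 < y i) ∧ ∑ i, y i ≤ c}
      = {y : ι → ℝ | (∀ i, y i < 0) ∧ ∑ i, -y i ≤ c} := by
    ext y
    simp only [Set.mem_preimage, Set.mem_setOf_eq, neg_pos]
  rw [← hpre, hmp.measure_preimage (simplex_meas_pos c).nullMeasurableSet,
    simplex_vol_pos c hc]

lemma piece_vol {n : ℕ} (S : Finset (Fin n)) (a b : ℝ) (ha : 0 ≤ a) (hb : 0 ≤ b) :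
    volume {x : Fin n → ℝ | (∀ j ∈ S, x j < 0) ∧ (∀ j ∉ S, 0 ≤ x j) ∧
        (∑ j ∈ S, -x j) ≤ a ∧ (∑ j ∈ Sᶜ, x j) ≤ b}
      = ENNReal.ofReal (a ^ S.card / S.card.factorial)
        * ENNReal.ofReal (b ^ (n - S.card) / (n - S.card).factorial) := by
  classical
  set A : Set ({j : Fin n // j ∈ S} → ℝ) := {y | (∀ i, y i < 0) ∧ ∑ i, -y i ≤ a} with hA
  set B : Set ({j : Fin n // ¬ j ∈ S} → ℝ) := {y | (∀ i, 0 ≤ y i) ∧ ∑ i, y i ≤ b} with hB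
  have hAm : MeasurableSet A := by
    rw [hA]
    simp only [Set.setOf_and]
    refine MeasurableSet.inter ?_ (measurableSet_le (by fun_prop) measurable_const)
    rw [Set.setOf_forall]
    exact MeasurableSet.iInter fun i =>
      measurableSet_lt (measurable_pi_apply i) measurable_const
  have hBm : MeasurableSet B := simplex_meas b
  have hmp := volume_preserving_piEquivPiSubtypeProd (fun _ : Fin n => ℝ) (· ∈ S)
  have hpre : (MeasurableEquiv.piEquivPiSubtypeProd (fun _ : Fin n => ℝ) (· ∈ S)) ⁻¹' (A ×ˢ B)
      = {x : Fin n → ℝ | (∀ j ∈ S, x j < 0) ∧ (∀ j ∉ S, 0 ≤ x j) ∧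
        (∑ j ∈ S, -x j) ≤ a ∧ (∑ j ∈ Sᶜ, x j) ≤ b} := by
    ext x
    simp only [Set.mem_preimage, Set.mem_prod, hA, hB, Set.mem_setOf_eq,
      MeasurableEquiv.piEquivPiSubtypeProd, MeasurableEquiv.coe_mk,
      Equiv.piEquivPiSubtypeProd_apply]
    have hs1 : (∑ j ∈ S, -x j) = ∑ i : {j : Fin n // j ∈ S}, -x i :=
      Finset.sum_subtype S (fun j => Iff.rfl) (fun j => -x j)
    have hs2 : (∑ j ∈ Sᶜ, x j) = ∑ i : {j : Fin n // ¬ j ∈ S}, x i :=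
      Finset.sum_subtype Sᶜ (fun j => Finset.mem_compl) x
    rw [Subtype.forall, Subtype.forall, hs1, hs2]
    tauto
  have h1 : volume A = ENNReal.ofReal (a ^ S.card / S.card.factorial) := by
    rw [hA, simplex_vol_neg a ha, Fintype.card_coe]
  have h2 : volume B
      = ENNReal.ofReal (b ^ (n - S.card) / (n - S.card).factorial) := by
    rw [hB, simplex_vol b hb, Fintype.card_subtype_compl, Fintype.card_coe, Fintype.card_fin]
  rw [← hpre, hmp.measure_preimage (hAm.prod hBm).nullMeasurableSet,
    Measure.volume_eq_prod, Measure.prod_prod]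
  convert congrArg₂ (· * ·) h1 h2 using 2 <;> congr!

lemma real_sum (n : ℕ) (γ : ℝ) :
    ∑ S : Finset (Fin n), ((γ - 1) / 2) ^ S.card / (S.card.factorial : ℝ) *
        (((γ + 1) / 2) ^ (n - S.card) / ((n - S.card).factorial : ℝ))
      = (1 / (2 ^ n * (Nat.factorial n) : ℝ)) *
          ∑ i ∈ Finset.range (n + 1),
            (n.choose i : ℝ) ^ 2 * (γ - 1) ^ (n - i) * (γ + 1) ^ i := by
  classical
  rw [← Finset.powerset_univ, Finset.sum_powerset_apply_card
    (fun m => ((γ - 1) / 2) ^ m / (m.factorial : ℝ) *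
        (((γ + 1) / 2) ^ (n - m) / ((n - m).factorial : ℝ)))]
  simp only [Finset.card_univ, Fintype.card_fin, nsmul_eq_mul]
  rw [Finset.mul_sum]
  conv_lhs => rw [← Finset.sum_range_reflect]
  apply Finset.sum_congr rfl
  intro i hi
  have hin : i ≤ n := Nat.lt_succ_iff.mp (Finset.mem_range.mp hi)
  have hred : n + 1 - 1 - i = n - i := by omega
  rw [hred, Nat.sub_sub_self hin, Nat.choose_symm hin]
  have key : ((n.choose i : ℝ)) * (i.factorial : ℝ) * ((n - i).factorial : ℝ)
      = (n.factorial : ℝ) := by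
    exact_mod_cast congrArg (Nat.cast : ℕ → ℝ) (Nat.choose_mul_factorial_mul_factorial hin)
  have h2 : (2:ℝ) ^ (n - i) * 2 ^ i = 2 ^ n := by
    rw [← pow_add, Nat.sub_add_cancel hin]
  have hfi : (i.factorial : ℝ) ≠ 0 := Nat.cast_ne_zero.mpr i.factorial_ne_zero
  have hfp : ((n - i).factorial : ℝ) ≠ 0 := Nat.cast_ne_zero.mpr (n - i).factorial_ne_zero
  have hfn : (n.factorial : ℝ) ≠ 0 := Nat.cast_ne_zero.mpr n.factorial_ne_zero
  have h2i : (2:ℝ) ^ i ≠ 0 := by positivity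
  have h2p : (2:ℝ) ^ (n - i) ≠ 0 := by positivity
  have h2n : (2:ℝ) ^ n ≠ 0 := by positivity
  rw [div_pow, div_pow]
  rw [div_div, div_div, div_mul_div_comm, one_div, mul_comm ((n.choose i : ℝ)) _]
  rw [inv_mul_eq_div, div_mul_eq_mul_div, div_eq_div_iff (by positivity) (by positivity)]
  linear_combination (-((γ-1)^(n-i)*(γ+1)^i*(n.choose i:ℝ)*2^n)) * key
    + (-((n.choose i:ℝ)^2*(γ-1)^(n-i)*(γ+1)^i*((n-i).factorial:ℝ)*(i.factorial:ℝ))) * h2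

theorem measure_E_eq_sum (n : ℕ) (hn : 1 ≤ n) (γ : ℝ) (hγ : 1 ≤ γ) :
    volume {x : Fin n → ℝ | (∑ j, |x j|) + |1 - ∑ j, x j| ≤ γ}
      = ENNReal.ofReal ((1 / (2 ^ n * (Nat.factorial n) : ℝ)) *
          ∑ i ∈ Finset.range (n + 1),
            (n.choose i : ℝ) ^ 2 * (γ - 1) ^ (n - i) * (γ + 1) ^ i) := by
  classical
  set a : ℝ := (γ - 1) / 2 with ha'
  set b : ℝ := (γ + 1) / 2 with hb'
  have ha : 0 ≤ a := by rw [ha']; linarith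
  have hb : 0 ≤ b := by rw [hb']; linarith
  set P : Finset (Fin n) → Set (Fin n → ℝ) := fun S =>
    {x | (∀ j ∈ S, x j < 0) ∧ (∀ j ∉ S, 0 ≤ x j) ∧
      (∑ j ∈ S, -x j) ≤ a ∧ (∑ j ∈ Sᶜ, x j) ≤ b} with hP
  have key : ∀ (x : Fin n → ℝ) (S : Finset (Fin n)),
      (∀ j ∈ S, x j < 0) → (∀ j ∉ S, 0 ≤ x j) →
      (((∑ j, |x j|) + |1 - ∑ j, x j| ≤ γ) ↔
        ((∑ j ∈ S, -x j) ≤ a ∧ (∑ j ∈ Sᶜ, x j) ≤ b)) := by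
    intro x S h1 h2
    have habs : ∑ j, |x j| = (∑ j ∈ S, -x j) + ∑ j ∈ Sᶜ, x j := by
      rw [← Finset.sum_add_sum_compl S (fun j => |x j|)]
      congr 1
      · exact Finset.sum_congr rfl fun j hj => abs_of_neg (h1 j hj)
      · exact Finset.sum_congr rfl fun j hj =>
          abs_of_nonneg (h2 j (Finset.mem_compl.mp hj))
    have hsum : ∑ j, x j = -(∑ j ∈ S, -x j) + ∑ j ∈ Sᶜ, x j := by
      rw [← Finset.sum_add_sum_compl S x]
      congr 1
      simp
    constructor
    · intro hx
      have h3 : |1 - ∑ j, x j| ≤ γ - ∑ j, |x j| := by linarith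
      obtain ⟨hl, hr⟩ := abs_le.mp h3
      rw [habs, hsum] at hl hr
      constructor
      · rw [ha']; linarith
      · rw [hb']; linarith
    · rintro ⟨hu, hv⟩
      rw [ha'] at hu; rw [hb'] at hv
      have h3 : |1 - ∑ j, x j| ≤ γ - ∑ j, |x j| := by
        rw [habs, hsum]
        rw [abs_le]
        constructor <;> linarith
      linarith
  have hE : {x : Fin n → ℝ | (∑ j, |x j|) + |1 - ∑ j, x j| ≤ γ}
      = ⋃ S : Finset (Fin n), P S := by
    ext x
    simp only [Set.mem_setOf_eq, Set.mem_iUnion, hP]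
    constructor
    · intro hx
      set S₀ : Finset (Fin n) := Finset.univ.filter (fun j => x j < 0) with hS₀
      have h1 : ∀ j ∈ S₀, x j < 0 := fun j hj => (Finset.mem_filter.mp hj).2
      have h2 : ∀ j ∉ S₀, 0 ≤ x j := fun j hj =>
        le_of_not_gt fun h => hj (Finset.mem_filter.mpr ⟨Finset.mem_univ _, h⟩)
      exact ⟨S₀, h1, h2, (key x S₀ h1 h2).mp hx⟩
    · rintro ⟨S, h1, h2, hc, hd⟩
      exact (key x S h1 h2).mpr ⟨hc, hd⟩
  have hPm : ∀ S : Finset (Fin n), MeasurableSet (P S) := by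
    intro S
    rw [hP]
    simp only [Set.setOf_and]
    refine MeasurableSet.inter ?_ (MeasurableSet.inter ?_ (MeasurableSet.inter
      (measurableSet_le (by fun_prop) measurable_const)
      (measurableSet_le (by fun_prop) measurable_const)))
    · rw [Set.setOf_forall]
      refine MeasurableSet.iInter fun j => ?_
      by_cases hj : j ∈ S
      · simp only [hj, true_implies]
        exact measurableSet_lt (measurable_pi_apply j) measurable_const
      · simp only [hj, false_implies, Set.setOf_true]
        exact MeasurableSet.univ
    · rw [Set.setOf_forall]
      refine MeasurableSet.iInter fun j => ?_
      by_cases hj : j ∈ S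
      · have : (fun x : Fin n → ℝ => j ∉ S → 0 ≤ x j) = fun _ => True := by
          funext x; simp [hj]
        rw [this, Set.setOf_true]
        exact MeasurableSet.univ
      · simp only [hj, not_false_iff, true_implies]
        exact measurableSet_le measurable_const (measurable_pi_apply j)
  have hdisj : Pairwise (Function.onFun Disjoint P) := by
    intro S T hST
    rw [Function.onFun, Set.disjoint_left]
    intro x hxS hxT
    simp only [hP, Set.mem_setOf_eq] at hxS hxT
    apply hST
    ext j
    constructor
    · intro hj
      by_contra hj'
      exact absurd (hxS.1 j hj) (not_lt.mpr (hxT.2.1 j hj'))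
    · intro hj
      by_contra hj'
      exact absurd (hxT.1 j hj) (not_lt.mpr (hxS.2.1 j hj'))
  rw [hE, measure_iUnion hdisj hPm, tsum_fintype]
  have hterm : ∀ S : Finset (Fin n), volume (P S)
      = ENNReal.ofReal (a ^ S.card / (S.card.factorial : ℝ) *
          (b ^ (n - S.card) / ((n - S.card).factorial : ℝ))) := by
    intro S
    rw [hP, piece_vol S a b ha hb, ← ENNReal.ofReal_mul (by positivity)]
  rw [Finset.sum_congr rfl fun S _ => hterm S]
  rw [← ENNReal.ofReal_sum_of_nonneg (fun S _ => by positivity)]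
  congr 1
  rw [ha', hb']
  exact real_sum n γ
end

section
/- For every real t ≠ 1 and positive integer n, Σ_{i=0}^{n} C(n,i)² t^i = (1−t)ⁿ χ_n((1+t)/(1−t)), where χ_n is the standardized Legendre polynomial of degree n. -/
open Polynomial Finset

lemma iteratedDeriv_polynomial (p : ℝ[X]) (n : ℕ) :
    iteratedDeriv n (fun x : ℝ => p.eval x) = fun x => (derivative^[n] p).eval x := by
  induction n with
  | zero => simp
  | succ n ih =>
    rw [iteratedDeriv_succ, ih, Function.iterate_succ_apply']
    funext x
    exact Polynomial.deriv _

lemma key (n : ℕ) :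
    derivative^[n] (((X : ℝ[X]) ^ 2 - 1) ^ n)
      = ∑ k ∈ range (n + 1),
          ((n.choose k : ℝ) ^ 2 * n.factorial) •
            ((X - 1) ^ k * (X + 1) ^ (n - k)) := by
  have h : ((X : ℝ[X]) ^ 2 - 1) ^ n = (X - 1) ^ n * (X + 1) ^ n := by
    rw [← mul_pow]; ring_nf
  rw [h, iterate_derivative_mul]
  refine Finset.sum_congr rfl fun k hk => ?_
  have hk' : k ≤ n := Nat.lt_succ_iff.mp (Finset.mem_range.mp hk)
  have h1 : derivative^[n - k] (((X : ℝ[X]) - 1) ^ n)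
      = (n.descFactorial (n - k)) • (((X : ℝ[X]) - 1) ^ k) := by
    have := Polynomial.iterate_derivative_X_sub_pow (R := ℝ) n (n - k) 1
    rw [Nat.sub_sub_self hk'] at this
    simpa using this
  have h2 : derivative^[k] (((X : ℝ[X]) + 1) ^ n)
      = (n.descFactorial k) • (((X : ℝ[X]) + 1) ^ (n - k)) := by
    have := Polynomial.iterate_derivative_X_add_pow (R := ℝ) n k 1
    simpa using this
  rw [h1, h2]
  simp only [← Nat.cast_smul_eq_nsmul ℝ, smul_mul_assoc, mul_smul_comm, smul_smul]
  congr 1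
  have e1 : n.descFactorial (n - k) = (n - k).factorial * n.choose k := by
    rw [Nat.descFactorial_eq_factorial_mul_choose, Nat.choose_symm hk']
  have e2 : n.descFactorial k = k.factorial * n.choose k := by
    rw [Nat.descFactorial_eq_factorial_mul_choose]
  have e3 := Nat.choose_mul_factorial_mul_factorial hk'
  rw [e1, e2, ← e3]
  push_cast
  ring

theorem sum_choose_sq_eq_legendre (n : ℕ) (hn : 1 ≤ n) (t : ℝ) (ht : t ≠ 1) :
    ∑ i ∈ Finset.range (n + 1), (n.choose i : ℝ) ^ 2 * t ^ i
      = (1 - t) ^ n * legendre n ((1 + t) / (1 - t)) := by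
  have hne : (1 : ℝ) - t ≠ 0 := sub_ne_zero.mpr (Ne.symm ht)
  have hs1 : (1 + t) / (1 - t) - 1 = 2 * t / (1 - t) := by
    field_simp; ring
  have hs2 : (1 + t) / (1 - t) + 1 = 2 / (1 - t) := by
    field_simp; ring
  have hfun : (fun s : ℝ => (s ^ 2 - 1) ^ n)
      = fun x : ℝ => Polynomial.eval x (((X : ℝ[X]) ^ 2 - 1) ^ n) := by
    funext x; simp
  rw [legendre, hfun, iteratedDeriv_polynomial, key]
  simp only [eval_finset_sum, eval_smul, eval_mul, eval_pow, eval_sub, eval_add, eval_X,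
    eval_one, smul_eq_mul]
  rw [Finset.mul_sum, Finset.mul_sum]
  refine Finset.sum_congr rfl fun k hk => ?_
  have hk' : k ≤ n := Nat.lt_succ_iff.mp (Finset.mem_range.mp hk)
  rw [hs1, hs2]
  have hfac : (n.factorial : ℝ) ≠ 0 := by positivity
  have hpow : ((1 : ℝ) - t) ^ n = (1 - t) ^ k * (1 - t) ^ (n - k) := by
    rw [← pow_add, Nat.add_sub_cancel' hk']
  have h2pow : (2 : ℝ) ^ k * 2 ^ (n - k) = 2 ^ n := by
    rw [← pow_add, Nat.add_sub_cancel' hk']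
  have ha : ((1:ℝ) - t) * (2 * t / (1 - t)) = 2 * t := mul_div_cancel₀ _ hne
  have hb : ((1:ℝ) - t) * (2 / (1 - t)) = 2 := mul_div_cancel₀ _ hne
  have key2 : ((1:ℝ) - t) ^ n * ((2 * t / (1 - t)) ^ k * (2 / (1 - t)) ^ (n - k))
      = 2 ^ n * t ^ k := by
    rw [hpow, mul_mul_mul_comm, ← mul_pow, ← mul_pow, ha, hb, mul_pow, ← h2pow]
    ring
  rw [show ((1 : ℝ) - t) ^ n * (1 / (2 ^ n * (n.factorial : ℝ)) *
        ((n.choose k : ℝ) ^ 2 * (n.factorial : ℝ) *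
          ((2 * t / (1 - t)) ^ k * (2 / (1 - t)) ^ (n - k))))
      = (n.choose k : ℝ) ^ 2 * (n.factorial : ℝ) / (2 ^ n * (n.factorial : ℝ)) *
        (((1 : ℝ) - t) ^ n * ((2 * t / (1 - t)) ^ k * (2 / (1 - t)) ^ (n - k))) from by
    ring, key2]
  field_simp
end

section
/- For all integers n > 1 and all s ≥ 1, the inverse of the standardized Legendre polynomial on [1,∞) satisfies χ_n^{-1}(s) > (s / C(n, ⌊n/2⌋))^{1/n}. Equivalently, for all t ≥ 1 and n > 1, χ_n(t) < C(n, ⌊n/2⌋) · tⁿ. -/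
/-- The inverse of the standardized Legendre polynomial on `[1, ∞)`. -/
noncomputable def legendreInv (n : ℕ) (s : ℝ) : ℝ :=
  sInf {t : ℝ | 1 ≤ t ∧ legendre n t = s}

open Polynomial Finset

lemma iteratedDeriv_eval (p : ℝ[X]) (m : ℕ) :
    iteratedDeriv m (fun x : ℝ => p.eval x) =
      fun x => (Polynomial.derivative^[m] p).eval x := by
  induction m with
  | zero => simp
  | succ m ih =>
    funext x
    rw [iteratedDeriv_succ, ih]
    have : (deriv fun x => (Polynomial.derivative^[m] p).eval x) =
        fun x => ((Polynomial.derivative^[m] p).derivative).eval x := by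
      funext y; exact Polynomial.deriv (p := Polynomial.derivative^[m] p)
    rw [this, Function.iterate_succ_apply']

lemma iterate_derivative_add_pow (c : ℝ) (n k : ℕ) :
    Polynomial.derivative^[k] ((X + C c) ^ n) =
      (n.descFactorial k : ℝ[X]) * (X + C c) ^ (n - k) := by
  induction k with
  | zero => simp
  | succ k ih =>
    rw [Function.iterate_succ_apply', ih, Polynomial.derivative_mul,
      Polynomial.derivative_natCast, zero_mul, zero_add, Polynomial.derivative_pow]
    simp only [Polynomial.derivative_add, Polynomial.derivative_X, Polynomial.derivative_C,
      add_zero, mul_one, map_natCast]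
    rw [Nat.sub_sub, Nat.descFactorial_succ]
    push_cast
    ring

lemma legendre_eq_sum (n : ℕ) (t : ℝ) :
    legendre n t = (1 / (2 : ℝ) ^ n) *
      ∑ k ∈ range (n + 1), (n.choose k : ℝ) ^ 2 * (t - 1) ^ k * (t + 1) ^ (n - k) := by
  have hfun : (fun s : ℝ => (s ^ 2 - 1) ^ n) =
      fun s : ℝ => (((X + C (-1 : ℝ)) ^ n * (X + C (1 : ℝ)) ^ n : ℝ[X])).eval s := by
    funext s
    simp only [Polynomial.eval_mul, Polynomial.eval_pow, Polynomial.eval_add, Polynomial.eval_X,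
      Polynomial.eval_C]
    rw [← mul_pow]
    congr 1
    ring
  unfold legendre
  rw [hfun]
  rw [show iteratedDeriv n (fun s : ℝ =>
        (((X + C (-1 : ℝ)) ^ n * (X + C (1 : ℝ)) ^ n : ℝ[X])).eval s) t
      = ((Polynomial.derivative^[n] ((X + C (-1 : ℝ)) ^ n * (X + C (1 : ℝ)) ^ n)).eval t)
    from congrFun (iteratedDeriv_eval _ n) t]
  rw [Polynomial.iterate_derivative_mul, Polynomial.eval_finset_sum]
  have hterm : ∀ k ∈ range (n + 1),
      ((n.choose k • (Polynomial.derivative^[n - k] ((X + C (-1 : ℝ)) ^ n) *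
        Polynomial.derivative^[k] ((X + C (1 : ℝ)) ^ n))).eval t)
      = (n.choose k : ℝ) * ((n.descFactorial (n - k) : ℝ) * (t + -1) ^ (n - (n - k))) *
          ((n.descFactorial k : ℝ) * (t + 1) ^ (n - k)) := by
    intro k hk
    rw [iterate_derivative_add_pow, iterate_derivative_add_pow]
    simp [mul_assoc]
  rw [Finset.sum_congr rfl hterm]
  have hcoef : ∀ k ∈ range (n + 1),
      (n.choose k : ℝ) * ((n.descFactorial (n - k) : ℝ) * (t + -1) ^ (n - (n - k))) *
          ((n.descFactorial k : ℝ) * (t + 1) ^ (n - k))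
      = (n.factorial : ℝ) * ((n.choose k : ℝ) ^ 2 * (t - 1) ^ k * (t + 1) ^ (n - k)) := by
    intro k hk
    rw [Finset.mem_range] at hk
    have hkn : k ≤ n := Nat.lt_succ_iff.mp hk
    have h1 : n - (n - k) = k := Nat.sub_sub_self hkn
    have h2 : (n.choose k) * (n.descFactorial (n - k)) * (n.descFactorial k)
        = n.factorial * (n.choose k) ^ 2 := by
      rw [Nat.descFactorial_eq_factorial_mul_choose, Nat.descFactorial_eq_factorial_mul_choose,
        Nat.choose_symm hkn]
      have h3 : (n.choose k) * (n - k).factorial * k.factorial = n.factorial := by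
        rw [mul_comm ((n.choose k)) _, mul_assoc, mul_comm (n-k).factorial _]
        exact Nat.choose_mul_factorial_mul_factorial hkn
      calc (n.choose k) * ((n - k).factorial * n.choose k) * (k.factorial * n.choose k)
          = ((n.choose k) * (n - k).factorial * k.factorial) * (n.choose k)^2 := by ring
        _ = n.factorial * (n.choose k) ^ 2 := by rw [h3]
    have h2' : (n.choose k : ℝ) * (n.descFactorial (n - k) : ℝ) * (n.descFactorial k : ℝ)
        = (n.factorial : ℝ) * (n.choose k : ℝ) ^ 2 := by exact_mod_cast congrArg Nat.cast h2
    rw [h1]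
    have : (t + -1) = (t - 1) := by ring
    rw [this]
    calc (n.choose k : ℝ) * ((n.descFactorial (n - k) : ℝ) * (t - 1) ^ k) *
          ((n.descFactorial k : ℝ) * (t + 1) ^ (n - k))
        = ((n.choose k : ℝ) * (n.descFactorial (n - k) : ℝ) * (n.descFactorial k : ℝ)) *
            ((t - 1) ^ k * (t + 1) ^ (n - k)) := by ring
      _ = (n.factorial : ℝ) * ((n.choose k : ℝ) ^ 2 * (t - 1) ^ k * (t + 1) ^ (n - k)) := by
          rw [h2']; ring
  rw [Finset.sum_congr rfl hcoef, ← Finset.mul_sum]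
  have hfac : (n.factorial : ℝ) ≠ 0 := by exact_mod_cast n.factorial_ne_zero
  field_simp

lemma legendre_lt (n : ℕ) (hn : 1 < n) (t : ℝ) (ht : 1 ≤ t) :
    legendre n t < (n.choose (n / 2) : ℝ) * t ^ n := by
  rw [legendre_eq_sum]
  have ht1 : (0:ℝ) ≤ t - 1 := by linarith
  have ht2 : (0:ℝ) < t + 1 := by linarith
  have hsum : ∑ k ∈ range (n + 1), (n.choose k : ℝ) ^ 2 * (t - 1) ^ k * (t + 1) ^ (n - k)
      < (n.choose (n / 2) : ℝ) * (2 * t) ^ n := by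
    have hb : (2 * t) ^ n = ∑ k ∈ range (n + 1),
        (t - 1) ^ k * (t + 1) ^ (n - k) * (n.choose k : ℝ) := by
      have := add_pow (t - 1) (t + 1) n
      have h2t : (t - 1) + (t + 1) = 2 * t := by ring
      rw [h2t] at this
      exact this
    rw [hb, Finset.mul_sum]
    apply Finset.sum_lt_sum
    · intro k hk
      have hle : (n.choose k : ℝ) ≤ (n.choose (n / 2) : ℝ) := by
        exact_mod_cast Nat.choose_le_middle k n
      have hnn : (0:ℝ) ≤ (t - 1) ^ k * (t + 1) ^ (n - k) := by positivity
      have hc : (0:ℝ) ≤ (n.choose k : ℝ) := by positivity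
      calc (n.choose k : ℝ) ^ 2 * (t - 1) ^ k * (t + 1) ^ (n - k)
          = (n.choose k : ℝ) * ((t - 1) ^ k * (t + 1) ^ (n - k) * (n.choose k : ℝ)) := by ring
        _ ≤ (n.choose (n / 2) : ℝ) * ((t - 1) ^ k * (t + 1) ^ (n - k) * (n.choose k : ℝ)) := by
            apply mul_le_mul_of_nonneg_right hle
            positivity
        _ = (n.choose (n / 2) : ℝ) * ((t - 1) ^ k * (t + 1) ^ (n - k) * (n.choose k : ℝ)) := rfl
    · refine ⟨0, Finset.mem_range.mpr (Nat.succ_pos n), ?_⟩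
      have hmid : (2 : ℝ) ≤ (n.choose (n / 2) : ℝ) := by
        have h1 : n ≤ n.choose (n / 2) := by
          have := Nat.choose_le_middle 1 n
          rwa [Nat.choose_one_right] at this
        have : 2 ≤ n.choose (n / 2) := le_trans hn h1
        exact_mod_cast this
      simp only [Nat.choose_zero_right, Nat.cast_one, one_pow, pow_zero, Nat.sub_zero]
      have hpos : (0:ℝ) < (t + 1) ^ n := pow_pos ht2 n
      nlinarith
  have h2 : (0:ℝ) < (2:ℝ) ^ n := by positivity
  calc (1 / (2:ℝ) ^ n) * ∑ k ∈ range (n + 1),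
        (n.choose k : ℝ) ^ 2 * (t - 1) ^ k * (t + 1) ^ (n - k)
      < (1 / (2:ℝ) ^ n) * ((n.choose (n / 2) : ℝ) * (2 * t) ^ n) := by
        apply mul_lt_mul_of_pos_left hsum
        positivity
    _ = (n.choose (n / 2) : ℝ) * t ^ n := by
        rw [mul_pow]
        field_simp

lemma legendre_ge (n : ℕ) (t : ℝ) (ht : 1 ≤ t) :
    (1 / (2:ℝ) ^ n) * (t - 1) ^ n ≤ legendre n t := by
  rw [legendre_eq_sum]
  have ht1 : (0:ℝ) ≤ t - 1 := by linarith
  have ht2 : (0:ℝ) ≤ t + 1 := by linarith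
  apply mul_le_mul_of_nonneg_left _ (by positivity : (0:ℝ) ≤ 1 / (2:ℝ) ^ n)
  have : (t - 1) ^ n = (n.choose n : ℝ) ^ 2 * (t - 1) ^ n * (t + 1) ^ (n - n) := by
    simp
  rw [this]
  apply Finset.single_le_sum (f := fun k => (n.choose k : ℝ) ^ 2 * (t - 1) ^ k * (t + 1) ^ (n - k))
  · intro k hk
    positivity
  · exact Finset.mem_range.mpr (Nat.lt_succ_self n)

lemma legendre_one (n : ℕ) : legendre n 1 = 1 := by
  rw [legendre_eq_sum]
  rw [Finset.sum_eq_single 0]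
  · norm_num
  · intro k hk hkn
    have h0 : (1:ℝ) - 1 = 0 := by ring
    rw [h0, zero_pow hkn]
    ring
  · intro h
    exact absurd (Finset.mem_range.mpr (Nat.succ_pos n)) h

lemma legendre_continuous (n : ℕ) : Continuous (legendre n) := by
  have : legendre n = fun t => (1 / (2:ℝ) ^ n) *
      ∑ k ∈ range (n + 1), (n.choose k : ℝ) ^ 2 * (t - 1) ^ k * (t + 1) ^ (n - k) := by
    funext t; exact legendre_eq_sum n t
  rw [this]
  continuity

theorem legendreInv_lower_bound (n : ℕ) (hn : 1 < n) :
    (∀ s : ℝ, 1 ≤ s →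
        legendreInv n s > (s / (n.choose (n / 2) : ℝ)) ^ ((1 : ℝ) / n)) ∧
    (∀ t : ℝ, 1 ≤ t → legendre n t < (n.choose (n / 2) : ℝ) * t ^ n) := by
  refine ⟨?_, fun t ht => legendre_lt n hn t ht⟩
  intro s hs
  set S : Set ℝ := {t : ℝ | 1 ≤ t ∧ legendre n t = s} with hS
  -- S is nonempty
  have hne : S.Nonempty := by
    have hsM : s ≤ legendre n (1 + 2 * s) := by
      have h1 : (1:ℝ) ≤ 1 + 2 * s := by linarith
      have := legendre_ge n (1 + 2 * s) h1
      have h2 : (1 / (2:ℝ) ^ n) * ((1 + 2 * s) - 1) ^ n = s ^ n := by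
        have : ((1 + 2 * s) - 1) = 2 * s := by ring
        rw [this, mul_pow]
        field_simp
      rw [h2] at this
      have h3 : s ≤ s ^ n := le_self_pow₀ hs (by omega)
      linarith
    have h1s : legendre n 1 ≤ s := by rw [legendre_one]; exact hs
    have hsub : Set.Icc (1:ℝ) (1 + 2*s) ⊆ Set.Icc (legendre n 1) (legendre n (1 + 2*s)) →
        True := fun _ => trivial
    have := intermediate_value_Icc (by linarith : (1:ℝ) ≤ 1 + 2 * s)
      (legendre_continuous n).continuousOn (a := 1) (b := 1 + 2*s)
    have hmem : s ∈ Set.Icc (legendre n 1) (legendre n (1 + 2*s)) := ⟨h1s, hsM⟩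
    obtain ⟨t, htIcc, hts⟩ := this hmem
    exact ⟨t, htIcc.1, hts⟩
  have hbdd : BddBelow S := ⟨1, fun t ht => ht.1⟩
  have hclosed : IsClosed S := by
    have : S = (legendre n) ⁻¹' {s} ∩ Set.Ici 1 := by
      ext t; simp [hS, Set.mem_Ici, and_comm]
    rw [this]
    exact ((isClosed_singleton.preimage (legendre_continuous n)).inter isClosed_Ici)
  have hmem : sInf S ∈ S := hclosed.csInf_mem hne hbdd
  obtain ⟨ht1, hts⟩ := hmem
  set t := sInf S
  -- now use part 2
  have hbound := legendre_lt n hn t ht1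
  rw [hts] at hbound
  have hCpos : (0:ℝ) < (n.choose (n / 2) : ℝ) := by
    have : 0 < n.choose (n / 2) := Nat.choose_pos (Nat.div_le_self n 2)
    exact_mod_cast this
  have hdiv : s / (n.choose (n / 2) : ℝ) < t ^ n := by
    rw [div_lt_iff₀ hCpos]
    linarith [hbound]
  have hspos : (0:ℝ) < s := by linarith
  have hsd : (0:ℝ) ≤ s / (n.choose (n / 2) : ℝ) := by positivity
  have htpos : (0:ℝ) < t := by linarith
  have hnR : (0:ℝ) < (1:ℝ) / n := by
    have : (0:ℝ) < (n:ℝ) := by exact_mod_cast (by omega : 0 < n)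
    positivity
  have key : (s / (n.choose (n / 2) : ℝ)) ^ ((1:ℝ)/n) < (t ^ n) ^ ((1:ℝ)/n) :=
    Real.rpow_lt_rpow hsd hdiv hnR
  have heq : ((t ^ n : ℝ)) ^ ((1:ℝ)/n) = t := by
    rw [← Real.rpow_natCast t n, ← Real.rpow_mul (le_of_lt htpos)]
    have hn0 : (n:ℝ) ≠ 0 := Nat.cast_ne_zero.mpr (by omega)
    rw [mul_one_div, div_self hn0, Real.rpow_one]
  rw [heq] at key
  exact key
end

section
/- The two-dimensional set E_{2,2} = {x ∈ ℝ² : |x_1| + |x_2| + |1−x_1−x_2| ≤ 2} has Lebesgue measure 11/4 = χ_2(2)/2!. -/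
open MeasureTheory Set

-- slice description
lemma slice_eq (x : ℝ) (h : |1 - x| ≤ 2 - |x|) :
    {y : ℝ | |x| + |y| + |1 - x - y| ≤ 2}
      = Icc ((1 - x - (2 - |x|)) / 2) ((1 - x + (2 - |x|)) / 2) := by
  ext y
  simp only [mem_setOf_eq, mem_Icc]
  rcases abs_cases y with ⟨h1, h2⟩ | ⟨h1, h2⟩ <;>
  rcases abs_cases (1 - x - y) with ⟨h3, h4⟩ | ⟨h3, h4⟩ <;>
  rcases abs_cases (1 - x) with ⟨h5, h6⟩ | ⟨h5, h6⟩ <;>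
  constructor <;> intro hy <;>
  first
  | (constructor <;> linarith)
  | (obtain ⟨hy1, hy2⟩ := hy; linarith)

lemma slice_empty (x : ℝ) (h : 2 - |x| < |1 - x|) :
    {y : ℝ | |x| + |y| + |1 - x - y| ≤ 2} = (∅ : Set ℝ) := by
  ext y
  simp only [mem_setOf_eq, mem_empty_iff_false, iff_false, not_le]
  have : |1 - x| ≤ |y| + |1 - x - y| := by
    have := abs_sub_abs_le_abs_sub (1 - x) y
    rcases abs_cases y with ⟨h1, h2⟩ | ⟨h1, h2⟩ <;>
    rcases abs_cases (1 - x - y) with ⟨h3, h4⟩ | ⟨h3, h4⟩ <;>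
    rcases abs_cases (1 - x) with ⟨h5, h6⟩ | ⟨h5, h6⟩ <;> linarith
  linarith

lemma cond_iff (x : ℝ) : |1 - x| ≤ 2 - |x| ↔ x ∈ Icc (-(1/2) : ℝ) (3/2) := by
  simp only [mem_Icc]
  rcases abs_cases x with ⟨h1, h2⟩ | ⟨h1, h2⟩ <;>
  rcases abs_cases (1 - x) with ⟨h3, h4⟩ | ⟨h3, h4⟩ <;>
  constructor <;> intro h <;> first | (constructor <;> linarith) | (obtain ⟨ha, hb⟩ := h; linarith)

lemma slice_vol (x : ℝ) :
    volume {y : ℝ | |x| + |y| + |1 - x - y| ≤ 2}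
      = ENNReal.ofReal ((Icc (-(1/2) : ℝ) (3/2)).indicator (fun x => 2 - |x|) x) := by
  by_cases h : |1 - x| ≤ 2 - |x|
  · rw [slice_eq x h, Real.volume_Icc, indicator_of_mem ((cond_iff x).mp h)]
    ring_nf
  · push_neg at h
    rw [slice_empty x h, measure_empty,
      indicator_of_notMem (fun hm => h.not_ge ((cond_iff x).mpr hm))]
    simp

lemma real_integral : ∫ x in Icc (-(1/2) : ℝ) (3/2), (2 - |x|) = 11 / 4 := by
  rw [integral_Icc_eq_integral_Ioc, ← intervalIntegral.integral_of_le (by norm_num : (-(1/2):ℝ) ≤ 3/2)]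
  have hcont : Continuous fun x : ℝ => 2 - |x| := by continuity
  have hi : ∀ a b : ℝ, IntervalIntegrable (fun x : ℝ => 2 - |x|) volume a b :=
    fun a b => hcont.intervalIntegrable a b
  rw [← intervalIntegral.integral_add_adjacent_intervals (hi (-(1/2)) 0) (hi 0 (3/2))]
  have h1 : ∫ x in (-(1/2) : ℝ)..0, (2 - |x|) = ∫ x in (-(1/2) : ℝ)..0, (2 + x) := by
    apply intervalIntegral.integral_congr
    intro t ht
    rw [uIcc_of_le (by norm_num : (-(1/2):ℝ) ≤ 0)] at ht
    simp only [abs_of_nonpos ht.2]; ring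
  have h2 : ∫ x in (0 : ℝ)..(3/2), (2 - |x|) = ∫ x in (0 : ℝ)..(3/2), (2 - x) := by
    apply intervalIntegral.integral_congr
    intro t ht
    rw [uIcc_of_le (by norm_num : (0:ℝ) ≤ 3/2)] at ht
    simp only [abs_of_nonneg ht.1]
  rw [h1, h2]
  rw [_root_.intervalIntegral.integral_add (intervalIntegrable_const) (_root_.intervalIntegral.intervalIntegrable_id),
    _root_.intervalIntegral.integral_sub (intervalIntegrable_const) (_root_.intervalIntegral.intervalIntegrable_id)]
  simp [_root_.integral_id]
  norm_num

theorem E_two_two :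
    volume {x : Fin 2 → ℝ | |x 0| + |x 1| + |1 - x 0 - x 1| ≤ 2}
      = ENNReal.ofReal (11 / 4) ∧
    (11 / 4 : ℝ) = legendre 2 2 / (Nat.factorial 2 : ℝ) := by
  constructor
  · -- measurability of the product set
    have hcont : Continuous fun p : ℝ × ℝ => |p.1| + |p.2| + |1 - p.1 - p.2| := by continuity
    have hT : MeasurableSet {p : ℝ × ℝ | |p.1| + |p.2| + |1 - p.1 - p.2| ≤ 2} :=
      measurableSet_le hcont.measurable measurable_const
    have hpre : {x : Fin 2 → ℝ | |x 0| + |x 1| + |1 - x 0 - x 1| ≤ 2}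
        = (MeasurableEquiv.finTwoArrow : (Fin 2 → ℝ) ≃ᵐ ℝ × ℝ) ⁻¹'
          {p : ℝ × ℝ | |p.1| + |p.2| + |1 - p.1 - p.2| ≤ 2} := rfl
    rw [hpre, (volume_preserving_finTwoArrow ℝ).measure_preimage hT.nullMeasurableSet]
    rw [Measure.volume_eq_prod, Measure.prod_apply hT]
    have hslice : ∀ x : ℝ, (Prod.mk x ⁻¹' {p : ℝ × ℝ | |p.1| + |p.2| + |1 - p.1 - p.2| ≤ 2})
        = {y : ℝ | |x| + |y| + |1 - x - y| ≤ 2} := fun x => rfl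
    simp_rw [hslice, slice_vol]
    have : ∀ x : ℝ, ENNReal.ofReal ((Icc (-(1/2) : ℝ) (3/2)).indicator (fun x => 2 - |x|) x)
        = (Icc (-(1/2) : ℝ) (3/2)).indicator (fun x => ENNReal.ofReal (2 - |x|)) x := by
      intro x
      by_cases hx : x ∈ Icc (-(1/2) : ℝ) (3/2)
      · rw [indicator_of_mem hx, indicator_of_mem hx]
      · rw [indicator_of_notMem hx, indicator_of_notMem hx, ENNReal.ofReal_zero]
    simp_rw [this]
    rw [lintegral_indicator measurableSet_Icc]
    rw [← ofReal_integral_eq_lintegral_ofReal]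
    · rw [real_integral]
    · exact (by continuity : Continuous fun x : ℝ => 2 - |x|).integrableOn_Icc
    · filter_upwards [ae_restrict_mem measurableSet_Icc] with x hx
      have h2 : |x| ≤ 3/2 := abs_le.mpr ⟨by linarith [hx.1], hx.2⟩
      show (0:ℝ) ≤ 2 - |x|
      linarith
  · have hfeq : (fun s : ℝ => (s ^ 2 - 1) ^ 2) = fun s => s ^ 4 - 2 * s ^ 2 + 1 := by
      funext s; ring
    have hd1 : ∀ x : ℝ, HasDerivAt (fun s : ℝ => s ^ 4 - 2 * s ^ 2 + 1) (4 * x ^ 3 - 4 * x) x := by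
      intro x
      have h := (((hasDerivAt_pow 4 x).sub ((hasDerivAt_pow 2 x).const_mul 2)).add_const 1)
      exact h.congr_deriv (by push_cast; ring)
    have hD1 : deriv (fun s : ℝ => s ^ 4 - 2 * s ^ 2 + 1) = fun x => 4 * x ^ 3 - 4 * x := by
      funext x; exact (hd1 x).deriv
    have hd2 : ∀ x : ℝ, HasDerivAt (fun s : ℝ => 4 * s ^ 3 - 4 * s) (12 * x ^ 2 - 4) x := by
      intro x
      have h := (((hasDerivAt_pow 3 x).const_mul 4).sub ((hasDerivAt_id x).const_mul 4))
      exact h.congr_deriv (by push_cast; ring)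
    have : iteratedDeriv 2 (fun s : ℝ => (s ^ 2 - 1) ^ 2) 2 = 44 := by
      rw [hfeq, iteratedDeriv_succ, iteratedDeriv_one, hD1, (hd2 2).deriv]
      norm_num
    simp only [legendre, this]
    norm_num
end

section
/- Let K be a convex body in ℝⁿ and S ⊂ K a nondegenerate simplex of maximum volume among simplices contained in K, with basic Lagrange polynomials λ_1, …, λ_{n+1}. Then |λ_j(x)| ≤ 1 for every x ∈ K and every j. -/
open MeasureTheory Pointwise

lemma det_id_add_smulRight {n : ℕ} (ℓ : (Fin n → ℝ) →ₗ[ℝ] ℝ) (c : Fin n → ℝ) :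
    LinearMap.det (LinearMap.id + LinearMap.smulRight ℓ c) = 1 + ℓ c := by
  classical
  let e := Pi.basisFun ℝ (Fin n)
  rw [← LinearMap.det_toMatrix e]
  have hM : LinearMap.toMatrix e e (LinearMap.id + LinearMap.smulRight ℓ c)
      = 1 + Matrix.replicateCol Unit c * Matrix.replicateRow Unit (fun k => ℓ (e k)) := by
    ext i k
    simp only [LinearMap.toMatrix_apply, Matrix.add_apply, Matrix.mul_apply,
      Matrix.replicateCol_apply, Matrix.replicateRow_apply, LinearMap.add_apply, LinearMap.id_apply,
      LinearMap.smulRight_apply, Pi.basisFun_apply, Pi.basisFun_repr, Pi.add_apply,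
      Pi.smul_apply, smul_eq_mul, Finset.sum_const, Finset.card_univ, Fintype.card_unit,
      one_smul]
    rw [Matrix.one_apply]
    by_cases h : i = k <;> simp [h, e, Pi.single_apply, mul_comm]
  rw [hM, Matrix.det_one_add_replicateCol_mul_replicateRow]
  congr 1
  rw [LinearMap.pi_apply_eq_sum_univ ℓ c, dotProduct]
  refine Finset.sum_congr rfl fun k _ => ?_
  simp only [smul_eq_mul, mul_comm]
  congr 2
  ext j
  simp [e, Pi.single_apply, eq_comm]

lemma vol_affine_image {n : ℕ} (f : (Fin n → ℝ) →ᵃ[ℝ] (Fin n → ℝ)) (s : Set (Fin n → ℝ)) :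
    volume (f '' s) = ENNReal.ofReal |LinearMap.det f.linear| * volume s := by
  have h : f '' s = (f 0) +ᵥ (f.linear '' s) := by
    ext y
    simp only [Set.mem_image, Set.mem_vadd_set]
    constructor
    · rintro ⟨z, hz, rfl⟩
      exact ⟨f.linear z, ⟨z, hz, rfl⟩, by
        rw [f.decomp]; simp [add_comm, vadd_eq_add]⟩
    · rintro ⟨w, ⟨z, hz, rfl⟩, rfl⟩
      exact ⟨z, hz, by rw [f.decomp]; simp [add_comm, vadd_eq_add]⟩
  rw [h, measure_vadd, Measure.addHaar_image_linearMap]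

theorem abs_lagrange_le_one (n : ℕ) (hn : 1 ≤ n) (K : Set (Fin n → ℝ))
    (hKcomp : IsCompact K) (hKconv : Convex ℝ K) (hKint : (interior K).Nonempty)
    (b : AffineBasis (Fin (n + 1)) ℝ (Fin n → ℝ)) (hb : ∀ j, b j ∈ K)
    (hmax : ∀ v : Fin (n + 1) → (Fin n → ℝ), (∀ j, v j ∈ K) →
      volume (convexHull ℝ (Set.range v)) ≤ volume (convexHull ℝ (Set.range b)))
    (x : Fin n → ℝ) (hx : x ∈ K) (j : Fin (n + 1)) :
    |b.coord j x| ≤ 1 := by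
  classical
  set c : Fin n → ℝ := x - b j with hc
  set ℓ : (Fin n → ℝ) →ₗ[ℝ] ℝ := (b.coord j).linear with hℓ
  -- the affine map T y = y + (coord j y) • c
  set T : (Fin n → ℝ) →ᵃ[ℝ] (Fin n → ℝ) :=
    AffineMap.id ℝ (Fin n → ℝ) +
      (LinearMap.toAffineMap (LinearMap.smulRight (LinearMap.id : ℝ →ₗ[ℝ] ℝ) c)).comp
        (b.coord j) with hT
  have hTapp : ∀ y, T y = y + (b.coord j y) • c := by
    intro y; simp [hT]
  have hTb : ∀ i, T (b i) = if j = i then x else b i := by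
    intro i
    rw [hTapp, b.coord_apply]
    by_cases h : j = i <;> simp [h, hc]
  have hTlin : T.linear = LinearMap.id + LinearMap.smulRight ℓ c := by
    refine LinearMap.ext fun y => ?_
    have h1 : T.linear y = T y - T 0 := by
      have h := congrFun T.decomp' y
      simpa using h
    have h2 : ℓ y = b.coord j y - b.coord j 0 := by
      have := (b.coord j).linearMap_vsub y 0
      simpa [hℓ] using this
    rw [h1, hTapp, hTapp, LinearMap.add_apply, LinearMap.id_apply,
      LinearMap.smulRight_apply, h2]
    ext t
    simp
    ring
  have hdet : LinearMap.det T.linear = b.coord j x := by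
    rw [hTlin, det_id_add_smulRight]
    have : ℓ c = b.coord j x - b.coord j (b j) := by
      have := (b.coord j).linearMap_vsub x (b j)
      simpa [hc, hℓ, vsub_eq_sub] using this
    rw [this, b.coord_apply_eq]
    ring
  -- the modified vertex family
  have hmem : ∀ i, T (b i) ∈ K := by
    intro i
    rw [hTb]
    by_cases h : j = i <;> simp [h, hx, hb i]
  have key := hmax (fun i => T (b i)) hmem
  have himg : convexHull ℝ (Set.range fun i => T (b i))
      = T '' convexHull ℝ (Set.range b) := by
    rw [AffineMap.image_convexHull]
    congr 1
    rw [← Set.range_comp]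
    rfl
  set V := volume (convexHull ℝ (Set.range ⇑b)) with hV
  have hvol : volume (convexHull ℝ (Set.range fun i => T (b i)))
      = ENNReal.ofReal |b.coord j x| * V := by
    rw [himg, vol_affine_image, hdet]
  rw [hvol] at key
  have hVfin : V ≠ ⊤ := by
    have hcpt : IsCompact (convexHull ℝ (Set.range ⇑b)) :=
      (Set.finite_range ⇑b).isCompact_convexHull ℝ
    exact hcpt.measure_lt_top.ne
  have hVpos : V ≠ 0 := by
    have hint : (interior (convexHull ℝ (Set.range ⇑b))).Nonempty :=
      ⟨_, b.centroid_mem_interior_convexHull⟩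
    have := isOpen_interior.measure_pos volume hint
    exact fun h => absurd (le_antisymm (le_trans (measure_mono interior_subset) h.le)
      (zero_le)) this.ne'
  have : ENNReal.ofReal |b.coord j x| ≤ 1 := by
    rw [← ENNReal.mul_le_mul_iff_left hVpos hVfin, one_mul]
    exact key
  rw [← ENNReal.ofReal_one] at this
  exact (ENNReal.ofReal_le_ofReal_iff (by norm_num)).mp this
end

section
/- Let K be a convex body in ℝⁿ and S ⊂ K a maximum-volume nondegenerate simplex with vertices x^{(1)},…,x^{(n+1)}. Then the Lagrange interpolation projector P_S with nodes at the vertices of S satisfies ‖P_S‖_K = max_{x∈K} Σ_{j=1}^{n+1} |λ_j(x)| ≤ n+1. -/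
open MeasureTheory Pointwise

lemma det_aux (n : ℕ) (f : (Fin n → ℝ) →ₗ[ℝ] ℝ) (w : Fin n → ℝ) :
    LinearMap.det (LinearMap.id + f.smulRight w) = 1 + f w := by
  rw [← LinearMap.det_toMatrix (Pi.basisFun ℝ (Fin n))]
  have h : (LinearMap.toMatrix (Pi.basisFun ℝ (Fin n)) (Pi.basisFun ℝ (Fin n)))
      (LinearMap.id + f.smulRight w)
      = 1 + Matrix.replicateCol Unit w * Matrix.replicateRow Unit (fun k => f (Pi.basisFun ℝ (Fin n) k)) := by
    ext i k
    simp [LinearMap.toMatrix_apply, Matrix.one_apply, Matrix.mul_apply, Matrix.replicateCol, Matrix.replicateRow,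
      LinearMap.smulRight_apply, mul_comm, Pi.single_apply, eq_comm]
  rw [h, Matrix.det_one_add_replicateCol_mul_replicateRow]
  congr 1
  rw [dotProduct, f.pi_apply_eq_sum_univ w]
  refine Finset.sum_congr rfl fun i _ => ?_
  have : (Pi.single i 1 : Fin n → ℝ) = fun j => if i = j then 1 else 0 := by
    ext j; simp [Pi.single_apply, eq_comm]
  rw [← this]
  simp [mul_comm]

lemma vol_update (n : ℕ) (b : AffineBasis (Fin (n + 1)) ℝ (Fin n → ℝ))
    (j : Fin (n + 1)) (x : Fin n → ℝ) :
    volume (convexHull ℝ (Set.range (Function.update (⇑b) j x)))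
      = ENNReal.ofReal |b.coord j x| * volume (convexHull ℝ (Set.range ⇑b)) := by
  set w : Fin n → ℝ := x - b j with hw
  set L : (Fin n → ℝ) →ₗ[ℝ] (Fin n → ℝ) := LinearMap.id + (b.coord j).linear.smulRight w with hL
  set T : (Fin n → ℝ) →ᵃ[ℝ] (Fin n → ℝ) :=
    { toFun := fun y => y + (b.coord j y) • w
      linear := L
      map_vadd' := by
        intro p v
        have h1 : b.coord j (v +ᵥ p) = (b.coord j).linear v + b.coord j p := by
          rw [AffineMap.map_vadd]; rfl
        simp only [vadd_eq_add] at h1 ⊢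
        simp only [hL, h1, LinearMap.add_apply, LinearMap.id_apply,
          LinearMap.smulRight_apply, add_smul]
        abel } with hT
  have hdet : LinearMap.det L = b.coord j x := by
    rw [hL, det_aux]
    have : (b.coord j).linear w = b.coord j x - b.coord j (b j) := by
      have := (b.coord j).linearMap_vsub x (b j)
      simpa [hw] using this
    rw [this, b.coord_apply]
    simp
  have himg : ⇑T '' (convexHull ℝ (Set.range ⇑b))
      = convexHull ℝ (Set.range (Function.update (⇑b) j x)) := by
    have hfun : ⇑T ∘ ⇑b = Function.update (⇑b) j x := by
      funext i
      by_cases h : i = j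
      · subst h
        show b i + (b.coord i (b i)) • w = _
        simp [b.coord_apply, hw]
      · show b i + (b.coord j (b i)) • w = _
        simp [b.coord_apply, Ne.symm h, Function.update_of_ne h]
    rw [AffineMap.image_convexHull, ← Set.range_comp, hfun]
  have hvolT : ∀ s : Set (Fin n → ℝ), volume (⇑T '' s)
      = ENNReal.ofReal |LinearMap.det L| * volume s := by
    intro s
    have hTfun : ⇑T = (fun z => T 0 +ᵥ z) ∘ ⇑L := by
      funext y
      have hy := congrFun T.decomp y
      simp only [Pi.add_apply] at hy
      simp only [Function.comp_apply, vadd_eq_add, hy]; exact add_comm _ _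
    rw [hTfun, Set.image_comp, Set.image_vadd, measure_vadd, Measure.addHaar_image_linearMap]
  rw [← himg, hvolT, hdet]

theorem norm_proj_maxvol_le (n : ℕ) (hn : 1 ≤ n) (K : Set (Fin n → ℝ))
    (hKcomp : IsCompact K) (hKconv : Convex ℝ K) (hKint : (interior K).Nonempty)
    (b : AffineBasis (Fin (n + 1)) ℝ (Fin n → ℝ)) (hb : ∀ j, b j ∈ K)
    (hmax : ∀ v : Fin (n + 1) → (Fin n → ℝ), (∀ j, v j ∈ K) →
      volume (convexHull ℝ (Set.range v)) ≤ volume (convexHull ℝ (Set.range b))) :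
    (⨆ x ∈ K, ∑ j, |b.coord j x|) ≤ n + 1 := by
  have hV0 : volume (convexHull ℝ (Set.range ⇑b)) ≠ 0 :=
    (Measure.measure_pos_of_nonempty_interior volume ⟨_, b.centroid_mem_interior_convexHull⟩).ne'
  have hVtop : volume (convexHull ℝ (Set.range ⇑b)) ≠ ⊤ := by
    refine (lt_of_le_of_lt (measure_mono ?_) hKcomp.measure_lt_top).ne
    exact convexHull_min (Set.range_subset_iff.2 hb) hKconv
  have key : ∀ x ∈ K, ∀ j, |b.coord j x| ≤ 1 := by
    intro x hx j
    have h := hmax (Function.update (⇑b) j x) (fun i => by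
      rcases eq_or_ne i j with rfl | hij
      · simpa using hx
      · simpa [Function.update_of_ne hij] using hb i)
    rw [vol_update] at h
    have h2 : ENNReal.ofReal |b.coord j x| ≤ 1 := by
      have h' : ENNReal.ofReal |b.coord j x| * volume (convexHull ℝ (Set.range ⇑b))
          ≤ 1 * volume (convexHull ℝ (Set.range ⇑b)) := by rwa [one_mul]
      exact (ENNReal.mul_le_mul_iff_left hV0 hVtop).1 h'
    exact ENNReal.ofReal_le_one.1 h2
  have hsum : ∀ x ∈ K, (∑ j, |b.coord j x|) ≤ (n : ℝ) + 1 := fun x hx => by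
    calc ∑ j, |b.coord j x| ≤ ∑ _j : Fin (n + 1), (1 : ℝ) :=
          Finset.sum_le_sum fun j _ => key x hx j
      _ = n + 1 := by simp
  exact Real.iSup_le (fun x => Real.iSup_le (fun hx => hsum x hx) (by positivity)) (by positivity)
end

section
/- For every integer n ≥ 1, θ_n(Q_n) > √(n−1)/e, where Q_n = [0,1]ⁿ is the unit cube and θ_n(Q_n) is the minimal norm of a Lagrange interpolation projector from C(Q_n) onto affine functions with n+1 nodes in Q_n. -/
open MeasureTheory

/-- Minimal norm of a Lagrange interpolation projector with nodes in `K`. -/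
noncomputable def theta (n : ℕ) (K : Set (Fin n → ℝ)) : ℝ :=
  sInf {r : ℝ | ∃ b : AffineBasis (Fin (n + 1)) ℝ (Fin n → ℝ),
    (∀ j, b j ∈ K) ∧ r = ⨆ x ∈ K, ∑ j, |b.coord j x|}


noncomputable def sg (b : Bool) : ℝ := if b then 1 else -1

lemma sum_bool_fun {n : ℕ} (f : (Fin (n+1) → Bool) → ℝ) :
    ∑ σ : Fin (n+1) → Bool, f σ
      = ∑ p : Bool × (Fin n → Bool), f (Fin.cons p.1 p.2) := by
  exact (Fintype.sum_equiv (Fin.consEquiv fun _ => Bool) _ _ (fun p => rfl)).symm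

lemma X_cons {n : ℕ} (a : Fin (n+1) → ℝ) (b : Bool) (σ : Fin n → Bool) :
    ∑ i, a i * sg ((Fin.cons b σ : ∀ _ : Fin (n+1), Bool) i)
      = a 0 * sg b + ∑ i : Fin n, a i.succ * sg (σ i) := by
  rw [Fin.sum_univ_succ]
  simp [Fin.cons_zero, Fin.cons_succ]

lemma card_fun_bool (n : ℕ) : (Finset.univ : Finset (Fin n → Bool)).card = 2 ^ n := by
  simp [Fintype.card_fun]

lemma T2 (n : ℕ) (a : Fin n → ℝ) :
    ∑ σ : Fin n → Bool, (∑ i, a i * sg (σ i)) ^ 2 = 2 ^ n * ∑ i, (a i) ^ 2 := by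
  induction n with
  | zero => simp
  | succ n ih =>
    rw [sum_bool_fun (fun σ => (∑ i, a i * sg (σ i)) ^ 2)]
    rw [Fintype.sum_prod_type]
    have h : ∀ (b : Bool) (σ : Fin n → Bool),
        (∑ i, a i * sg ((Fin.cons b σ : ∀ _ : Fin (n+1), Bool) i)) ^ 2
        = (a 0 * sg b) ^ 2 + 2 * (a 0 * sg b) * (∑ i : Fin n, a i.succ * sg (σ i))
          + (∑ i : Fin n, a i.succ * sg (σ i)) ^ 2 := by
      intro b σ; rw [X_cons]; ring
    simp only [h]
    rw [Fintype.sum_bool]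
    have ihs := ih (fun i => a i.succ)
    rw [Fin.sum_univ_succ]
    simp only [Finset.sum_add_distrib, Finset.sum_const, card_fun_bool, ihs]
    simp [sg]
    ring

lemma T4 (n : ℕ) (a : Fin n → ℝ) :
    ∑ σ : Fin n → Bool, (∑ i, a i * sg (σ i)) ^ 4
      ≤ 3 * 2 ^ n * (∑ i, (a i) ^ 2) ^ 2 := by
  induction n with
  | zero => simp
  | succ n ih =>
    rw [sum_bool_fun (fun σ => (∑ i, a i * sg (σ i)) ^ 4)]
    rw [Fintype.sum_prod_type]
    have h : ∀ (b : Bool) (σ : Fin n → Bool),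
        (∑ i, a i * sg ((Fin.cons b σ : ∀ _ : Fin (n+1), Bool) i)) ^ 4
        = (a 0 * sg b + ∑ i : Fin n, a i.succ * sg (σ i)) ^ 4 := by
      intro b σ; rw [X_cons]
    simp only [h]
    rw [Fintype.sum_bool]
    have hexp : ∀ σ : Fin n → Bool,
        (a 0 * sg true + ∑ i : Fin n, a i.succ * sg (σ i)) ^ 4
        + (a 0 * sg false + ∑ i : Fin n, a i.succ * sg (σ i)) ^ 4
        = 2 * (∑ i : Fin n, a i.succ * sg (σ i)) ^ 4
          + 12 * (a 0) ^ 2 * (∑ i : Fin n, a i.succ * sg (σ i)) ^ 2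
          + 2 * (a 0) ^ 4 := by
      intro σ; simp only [sg]; norm_num; ring
    rw [← Finset.sum_add_distrib]
    simp only [hexp]
    rw [Finset.sum_add_distrib, Finset.sum_add_distrib, Finset.sum_const, card_fun_bool,
      ← Finset.mul_sum, ← Finset.mul_sum, T2]
    have ihs := ih (fun i => a i.succ)
    rw [Fin.sum_univ_succ]
    have h2 : (0:ℝ) < 2 ^ n := by positivity
    set S := ∑ i : Fin n, (a i.succ) ^ 2 with hS
    have hSnn : 0 ≤ S := Finset.sum_nonneg fun i _ => sq_nonneg _
    rw [nsmul_eq_mul]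
    have hp : (2:ℝ) ^ (n+1) = 2 ^ n * 2 := pow_succ 2 n
    rw [hp]
    push_cast
    nlinarith [mul_nonneg h2.le (pow_nonneg (sq_nonneg (a 0)) 2),
      mul_nonneg (mul_nonneg h2.le (sq_nonneg (a 0))) hSnn]

lemma khinchine (n : ℕ) (a : Fin n → ℝ) :
    2 ^ n * Real.sqrt (∑ i, (a i) ^ 2) / Real.sqrt 3
      ≤ ∑ σ : Fin n → Bool, |∑ i, a i * sg (σ i)| := by
  set S := ∑ i, (a i) ^ 2 with hS
  have hSnn : 0 ≤ S := Finset.sum_nonneg fun i _ => sq_nonneg _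
  set T1 := ∑ σ : Fin n → Bool, |∑ i, a i * sg (σ i)| with hT1
  have hT1nn : 0 ≤ T1 := Finset.sum_nonneg fun σ _ => abs_nonneg _
  rcases eq_or_lt_of_le hSnn with hS0 | hSpos
  · rw [← hS0, Real.sqrt_zero]
    simpa using hT1nn
  set T3 := ∑ σ : Fin n → Bool, |∑ i, a i * sg (σ i)| ^ 3 with hT3
  set T4v := ∑ σ : Fin n → Bool, (∑ i, a i * sg (σ i)) ^ 4 with hT4v
  have h2 : (2:ℝ) ^ n * S = ∑ σ : Fin n → Bool, (∑ i, a i * sg (σ i)) ^ 2 := (T2 n a).symm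
  -- Cauchy-Schwarz 1 : (∑ X²)² ≤ T1 * T3
  have cs1 : (2 ^ n * S) ^ 2 ≤ T1 * T3 := by
    rw [h2]
    have := Finset.sum_mul_sq_le_sq_mul_sq Finset.univ
      (fun σ : Fin n → Bool => Real.sqrt |∑ i, a i * sg (σ i)|)
      (fun σ : Fin n → Bool => Real.sqrt (|∑ i, a i * sg (σ i)| ^ 3))
    calc (∑ σ : Fin n → Bool, (∑ i, a i * sg (σ i)) ^ 2) ^ 2
        = (∑ σ : Fin n → Bool, Real.sqrt |∑ i, a i * sg (σ i)|
            * Real.sqrt (|∑ i, a i * sg (σ i)| ^ 3)) ^ 2 := by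
          congr 1
          refine Finset.sum_congr rfl fun σ _ => ?_
          rw [← Real.sqrt_mul (abs_nonneg _)]
          rw [show |∑ i, a i * sg (σ i)| * |∑ i, a i * sg (σ i)| ^ 3
              = ((∑ i, a i * sg (σ i)) ^ 2) ^ 2 from by rw [← sq_abs, abs_pow]; ring]
          exact (Real.sqrt_sq (sq_nonneg _)).symm
      _ ≤ (∑ σ : Fin n → Bool, Real.sqrt |∑ i, a i * sg (σ i)| ^ 2)
            * ∑ σ : Fin n → Bool, Real.sqrt (|∑ i, a i * sg (σ i)| ^ 3) ^ 2 := this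
      _ = T1 * T3 := by
          congr 1
          · exact Finset.sum_congr rfl fun σ _ => Real.sq_sqrt (abs_nonneg _)
          · exact Finset.sum_congr rfl fun σ _ => Real.sq_sqrt (pow_nonneg (abs_nonneg _) 3)
  -- Cauchy-Schwarz 2 : T3² ≤ (2^n S) * T4v
  have cs2 : T3 ^ 2 ≤ (2 ^ n * S) * T4v := by
    rw [h2]
    have := Finset.sum_mul_sq_le_sq_mul_sq Finset.univ
      (fun σ : Fin n → Bool => |∑ i, a i * sg (σ i)|)
      (fun σ : Fin n → Bool => (∑ i, a i * sg (σ i)) ^ 2)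
    calc T3 ^ 2 = (∑ σ : Fin n → Bool, |∑ i, a i * sg (σ i)| * (∑ i, a i * sg (σ i)) ^ 2) ^ 2 := by
          congr 1
          exact Finset.sum_congr rfl fun σ _ => by rw [← sq_abs]; ring
      _ ≤ (∑ σ : Fin n → Bool, |∑ i, a i * sg (σ i)| ^ 2)
            * ∑ σ : Fin n → Bool, ((∑ i, a i * sg (σ i)) ^ 2) ^ 2 := this
      _ = (∑ σ : Fin n → Bool, (∑ i, a i * sg (σ i)) ^ 2) * T4v := by
          congr 1
          · exact Finset.sum_congr rfl fun σ _ => sq_abs _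
          · exact Finset.sum_congr rfl fun σ _ => by ring
  have ht4 : T4v ≤ 3 * 2 ^ n * S ^ 2 := T4 n a
  have hP : (0:ℝ) < 2 ^ n := by positivity
  have hT2pos : (0:ℝ) < 2 ^ n * S := mul_pos hP hSpos
  have hT3nn : 0 ≤ T3 := Finset.sum_nonneg fun σ _ => pow_nonneg (abs_nonneg _) 3
  -- combine : (2^n S)^4 ≤ T1² T3² ≤ T1² (2^n S) T4v ≤ T1² (2^n S) 3 2^n S²
  have key : (2 ^ n * S) ^ 3 ≤ T1 ^ 2 * (3 * 2 ^ n * S ^ 2) := by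
    have c1 : ((2 ^ n * S) ^ 2) ^ 2 ≤ (T1 * T3) ^ 2 := by
      apply pow_le_pow_left₀ (sq_nonneg _) cs1
    have c2 : (T1 * T3) ^ 2 = T1 ^ 2 * T3 ^ 2 := by ring
    have c3 : T1 ^ 2 * T3 ^ 2 ≤ T1 ^ 2 * ((2 ^ n * S) * (3 * 2 ^ n * S ^ 2)) := by
      apply mul_le_mul_of_nonneg_left _ (sq_nonneg T1)
      calc T3 ^ 2 ≤ (2 ^ n * S) * T4v := cs2
        _ ≤ (2 ^ n * S) * (3 * 2 ^ n * S ^ 2) := by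
            exact mul_le_mul_of_nonneg_left ht4 hT2pos.le
    have : ((2 ^ n * S) ^ 2) ^ 2 ≤ T1 ^ 2 * ((2 ^ n * S) * (3 * 2 ^ n * S ^ 2)) :=
      le_trans c1 (le_of_eq_of_le c2 c3)
    have hcancel := mul_le_mul_of_nonneg_left this (le_of_lt (inv_pos.2 hT2pos))
    calc (2 ^ n * S) ^ 3 = (2 ^ n * S)⁻¹ * ((2 ^ n * S) ^ 2) ^ 2 := by
          field_simp
      _ ≤ (2 ^ n * S)⁻¹ * (T1 ^ 2 * ((2 ^ n * S) * (3 * 2 ^ n * S ^ 2))) := hcancel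
      _ = T1 ^ 2 * (3 * 2 ^ n * S ^ 2) := by field_simp
  -- hence T1² ≥ 4^n S / 3
  have hT1sq : (2 ^ n * Real.sqrt S / Real.sqrt 3) ^ 2 ≤ T1 ^ 2 := by
    have hq : (2 ^ n * Real.sqrt S / Real.sqrt 3) ^ 2 = (2 ^ n) ^ 2 * S / 3 := by
      rw [div_pow, mul_pow, Real.sq_sqrt hSnn, Real.sq_sqrt (by norm_num : (3:ℝ) ≥ 0)]
    rw [hq]
    rw [div_le_iff₀ (by norm_num : (0:ℝ) < 3)]
    have h3 : (2 ^ n * S) ^ 3 = ((2 ^ n) ^ 2 * S) * (2 ^ n * S ^ 2) := by ring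
    have h4 : T1 ^ 2 * (3 * 2 ^ n * S ^ 2) = (T1 ^ 2 * 3) * (2 ^ n * S ^ 2) := by ring
    rw [h3, h4] at key
    exact le_of_mul_le_mul_right key (by positivity)
  have hLnn : 0 ≤ 2 ^ n * Real.sqrt S / Real.sqrt 3 := by positivity
  calc 2 ^ n * Real.sqrt S / Real.sqrt 3
      = Real.sqrt ((2 ^ n * Real.sqrt S / Real.sqrt 3) ^ 2) := (Real.sqrt_sq hLnn).symm
    _ ≤ Real.sqrt (T1 ^ 2) := Real.sqrt_le_sqrt hT1sq
    _ = T1 := Real.sqrt_sq hT1nn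

noncomputable def stdAffPts (n : ℕ) : Fin (n+1) → (Fin n → ℝ) :=
  Fin.cons 0 (fun i => Pi.single i 1)

lemma stdAff_ind (n : ℕ) : AffineIndependent ℝ (stdAffPts n) := by
  rw [affineIndependent_iff_linearIndependent_vsub ℝ _ 0]
  have h0 : stdAffPts n 0 = 0 := rfl
  have key : (fun (j : {x : Fin (n+1) // x ≠ 0}) => (stdAffPts n j -ᵥ stdAffPts n 0 : Fin n → ℝ))
      = (fun i => (Pi.basisFun ℝ (Fin n)) i) ∘ (fun j : {x : Fin (n+1) // x ≠ 0} => (j : Fin (n+1)).pred j.2) := by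
    funext j
    simp only [Function.comp_apply, Pi.basisFun_apply, h0, vsub_eq_sub, sub_zero]
    have : (j : Fin (n+1)) = ((j : Fin (n+1)).pred j.2).succ := (Fin.succ_pred _ _).symm
    rw [show stdAffPts n j = Pi.single ((j : Fin (n+1)).pred j.2) 1 from by
      conv_lhs => rw [this]
      exact Fin.cons_succ _ _ _]
  rw [key]
  exact (Pi.basisFun ℝ (Fin n)).linearIndependent.comp _
    (fun a b hab => by
      have := congrArg Fin.succ hab
      rw [Fin.succ_pred, Fin.succ_pred] at this
      exact Subtype.ext this)

noncomputable def stdAffBasis (n : ℕ) : AffineBasis (Fin (n+1)) ℝ (Fin n → ℝ) :=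
  ⟨stdAffPts n, stdAff_ind n,
    (stdAff_ind n).affineSpan_eq_top_iff_card_eq_finrank_add_one.2 (by simp)⟩

lemma stdAffBasis_apply (n : ℕ) (j : Fin (n+1)) : stdAffBasis n j = stdAffPts n j := rfl

lemma stdAffBasis_mem (n : ℕ) (j : Fin (n+1)) :
    stdAffBasis n j ∈ Set.Icc (0 : Fin n → ℝ) 1 := by
  constructor <;> rw [Pi.le_def] <;> intro i <;>
    · rcases Fin.eq_zero_or_eq_succ j with h | ⟨k, h⟩ <;> subst h <;>
        simp only [stdAffBasis_apply, stdAffPts, Fin.cons_zero, Fin.cons_succ,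
          Pi.single_apply, Pi.zero_apply, Pi.one_apply] <;>
        first
          | (split <;> norm_num)
          | positivity
          | norm_num

noncomputable def coefC {n : ℕ} (b : AffineBasis (Fin (n+1)) ℝ (Fin n → ℝ))
    (j : Fin (n+1)) (i : Fin n) : ℝ :=
  (b.coord j).linear (fun k => if i = k then 1 else 0)

lemma coord_expand {n : ℕ} (b : AffineBasis (Fin (n+1)) ℝ (Fin n → ℝ)) (j : Fin (n+1))
    (x : Fin n → ℝ) : b.coord j x = b.coord j 0 + ∑ i, x i * coefC b j i := by
  have h1 := congrFun (AffineMap.decomp (b.coord j)) x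
  simp only [Pi.add_apply] at h1
  rw [show (b.coord j) x = ((b.coord j).linear x + b.coord j 0) from h1]
  rw [LinearMap.pi_apply_eq_sum_univ]
  simp only [smul_eq_mul, coefC]
  ring

lemma coefC_eq {n : ℕ} (b : AffineBasis (Fin (n+1)) ℝ (Fin n → ℝ)) (j : Fin (n+1)) (i : Fin n) :
    coefC b j i = b.coord j (fun k => if i = k then (1:ℝ) else 0) - b.coord j 0 := by
  rw [coord_expand]
  have : ∑ k, (if i = k then (1:ℝ) else 0) * coefC b j k = coefC b j i := by
    simp [ite_mul]
  rw [this]; ring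

lemma sum_coefC {n : ℕ} (b : AffineBasis (Fin (n+1)) ℝ (Fin n → ℝ)) (i : Fin n) :
    ∑ j, coefC b j i = 0 := by
  simp only [coefC_eq]
  rw [Finset.sum_sub_distrib, b.sum_coord_apply_eq_one, b.sum_coord_apply_eq_one, sub_self]

lemma sum_bc {n : ℕ} (b : AffineBasis (Fin (n+1)) ℝ (Fin n → ℝ)) (i : Fin n) :
    ∑ j, b j i * coefC b j i = 1 := by
  have h1 := congrFun (b.linear_combination_coord_eq_self (fun k => if i = k then (1:ℝ) else 0)) i
  have h0 := congrFun (b.linear_combination_coord_eq_self (0 : Fin n → ℝ)) i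
  rw [Finset.sum_apply] at h1 h0
  simp only [Pi.smul_apply, smul_eq_mul, Pi.zero_apply, eq_self_iff_true, if_true] at h1 h0
  calc ∑ j, b j i * coefC b j i
      = ∑ j, (b.coord j (fun k => if i = k then (1:ℝ) else 0) * b j i - b.coord j 0 * b j i) := by
        refine Finset.sum_congr rfl fun j _ => ?_
        rw [coefC_eq]; ring
    _ = 1 := by rw [Finset.sum_sub_distrib, h1, h0]; simp

lemma two_le_sum_abs {n : ℕ} (b : AffineBasis (Fin (n+1)) ℝ (Fin n → ℝ))
    (hb : ∀ j, b j ∈ Set.Icc (0 : Fin n → ℝ) 1) (i : Fin n) :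
    2 ≤ ∑ j, |coefC b j i| := by
  have hA := sum_bc b i
  have hB := sum_coefC b i
  have hper : ∀ j, b j i * coefC b j i ≤ (|coefC b j i| + coefC b j i) / 2 := by
    intro j
    have h0 : 0 ≤ b j i := by
      have := (hb j).1; rw [Pi.le_def] at this; simpa using this i
    have h1 : b j i ≤ 1 := by
      have := (hb j).2; rw [Pi.le_def] at this; simpa using this i
    rcases abs_cases (coefC b j i) with ⟨he, hc⟩ | ⟨he, hc⟩ <;> rw [he] <;> nlinarith
  have hle := Finset.sum_le_sum (fun j (_ : j ∈ Finset.univ) => hper j)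
  rw [hA] at hle
  have hsum : ∑ j, (|coefC b j i| + coefC b j i) / 2 = (∑ j, |coefC b j i|) / 2 := by
    rw [← Finset.sum_div, Finset.sum_add_distrib, hB, add_zero]
  rw [hsum] at hle
  linarith

lemma l1_le_sqrt_l2 {n : ℕ} (c : Fin n → ℝ) :
    (∑ i, |c i|) / Real.sqrt n ≤ Real.sqrt (∑ i, (c i) ^ 2) := by
  rcases Nat.eq_zero_or_pos n with h | h
  · subst h; simp
  have hn : (0:ℝ) < n := by exact_mod_cast h
  have hsq : (∑ i, |c i|) ^ 2 ≤ n * ∑ i, (c i) ^ 2 := by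
    have := Finset.sum_mul_sq_le_sq_mul_sq Finset.univ (fun _ : Fin n => (1:ℝ))
      (fun i => |c i|)
    simp only [one_pow, one_mul, Finset.sum_const, Finset.card_univ, Fintype.card_fin,
      nsmul_eq_mul, sq_abs, mul_one] at this
    exact this
  have h1 : ∑ i, |c i| ≤ Real.sqrt n * Real.sqrt (∑ i, (c i) ^ 2) := by
    have hnn : 0 ≤ ∑ i, |c i| := Finset.sum_nonneg fun i _ => abs_nonneg _
    calc ∑ i, |c i| = Real.sqrt ((∑ i, |c i|) ^ 2) := (Real.sqrt_sq hnn).symm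
      _ ≤ Real.sqrt (n * ∑ i, (c i) ^ 2) := Real.sqrt_le_sqrt hsq
      _ = Real.sqrt n * Real.sqrt (∑ i, (c i) ^ 2) := Real.sqrt_mul hn.le _
  rw [div_le_iff₀ (Real.sqrt_pos.2 hn)]
  linarith [h1]

lemma main_lb (n : ℕ) (hn : 1 ≤ n) (b : AffineBasis (Fin (n+1)) ℝ (Fin n → ℝ))
    (hb : ∀ j, b j ∈ Set.Icc (0 : Fin n → ℝ) 1) :
    Real.sqrt n / Real.sqrt 3 ≤ ⨆ x ∈ Set.Icc (0 : Fin n → ℝ) 1, ∑ j, |b.coord j x| := by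
  classical
  set M := ⨆ x ∈ Set.Icc (0 : Fin n → ℝ) 1, ∑ j, |b.coord j x| with hM
  -- vertices
  set v : (Fin n → Bool) → (Fin n → ℝ) := fun σ i => if σ i then 1 else 0 with hv
  have hvK : ∀ σ, v σ ∈ Set.Icc (0 : Fin n → ℝ) 1 := by
    intro σ
    constructor <;> rw [Pi.le_def] <;> intro i <;>
      simp only [hv, Pi.zero_apply, Pi.one_apply] <;> split <;> norm_num
  -- uniform bound
  set C : ℝ := ∑ j, (|b.coord j 0| + ∑ i, |coefC b j i|) with hC
  have hFC : ∀ x ∈ Set.Icc (0 : Fin n → ℝ) 1, (∑ j, |b.coord j x|) ≤ C := by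
    intro x hx
    apply Finset.sum_le_sum; intro j _
    rw [coord_expand]
    refine le_trans (abs_add_le _ _) (add_le_add_right ?_ _)
    refine le_trans (Finset.abs_sum_le_sum_abs _ _) (Finset.sum_le_sum ?_)
    intro i _
    rw [abs_mul]
    have hx0 : 0 ≤ x i := by have := hx.1; rw [Pi.le_def] at this; simpa using this i
    have hx1 : x i ≤ 1 := by have := hx.2; rw [Pi.le_def] at this; simpa using this i
    calc |x i| * |coefC b j i| ≤ 1 * |coefC b j i| := by
          apply mul_le_mul_of_nonneg_right _ (abs_nonneg _)
          rw [abs_of_nonneg hx0]; exact hx1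
      _ = |coefC b j i| := one_mul _
  have hbdd : BddAbove (Set.range fun x => ⨆ _ : x ∈ Set.Icc (0 : Fin n → ℝ) 1,
      ∑ j, |b.coord j x|) := by
    refine ⟨max C 0, ?_⟩
    rintro r ⟨x, rfl⟩
    dsimp only
    by_cases hx : x ∈ Set.Icc (0 : Fin n → ℝ) 1
    · rw [ciSup_pos hx]; exact le_max_of_le_left (hFC x hx)
    · haveI : IsEmpty (x ∈ Set.Icc (0 : Fin n → ℝ) 1) := ⟨hx⟩
      rw [Real.iSup_of_isEmpty]
      exact le_max_right _ _
  have hMle : ∀ σ, (∑ j, |b.coord j (v σ)|) ≤ M := by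
    intro σ
    have h := le_ciSup hbdd (v σ)
    rwa [ciSup_pos (hvK σ)] at h
  -- flip
  set fl : (Fin n → Bool) → (Fin n → Bool) := fun σ i => !(σ i) with hfldef
  have hfl : Function.Involutive fl := by intro σ; funext i; simp [hfldef]
  -- per-j bound
  have hDj : ∀ j, (2:ℝ)^n * Real.sqrt (∑ i, (coefC b j i)^2) / Real.sqrt 3
      ≤ 2 * ∑ σ : Fin n → Bool, |b.coord j (v σ)| := by
    intro j
    have hsplit : 2 * ∑ σ : Fin n → Bool, |b.coord j (v σ)|
        = ∑ σ : Fin n → Bool, (|b.coord j (v σ)| + |b.coord j (v (fl σ))|) := by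
      rw [Finset.sum_add_distrib, two_mul]
      congr 1
      exact (Fintype.sum_bijective fl hfl.bijective _ _ (fun σ => rfl)).symm
    have habs : ∀ σ, |∑ i, coefC b j i * sg (σ i)|
        ≤ |b.coord j (v σ)| + |b.coord j (v (fl σ))| := by
      intro σ
      have hdiff : b.coord j (v σ) - b.coord j (v (fl σ)) = ∑ i, coefC b j i * sg (σ i) := by
        rw [coord_expand b j (v σ), coord_expand b j (v (fl σ))]
        have : ∀ i, v σ i * coefC b j i - v (fl σ) i * coefC b j i
            = coefC b j i * sg (σ i) := by
          intro i
          simp only [hv, hfldef]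
          by_cases hbi : σ i = true <;> simp [hbi, sg] <;> ring
        calc b.coord j 0 + (∑ i, v σ i * coefC b j i)
              - (b.coord j 0 + ∑ i, v (fl σ) i * coefC b j i)
            = ∑ i, (v σ i * coefC b j i - v (fl σ) i * coefC b j i) := by
              rw [Finset.sum_sub_distrib]; ring
          _ = ∑ i, coefC b j i * sg (σ i) := Finset.sum_congr rfl fun i _ => this i
      calc |∑ i, coefC b j i * sg (σ i)|
          = |b.coord j (v σ) - b.coord j (v (fl σ))| := by rw [hdiff]
        _ ≤ _ := abs_sub _ _
    calc (2:ℝ)^n * Real.sqrt (∑ i, (coefC b j i)^2) / Real.sqrt 3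
        ≤ ∑ σ : Fin n → Bool, |∑ i, coefC b j i * sg (σ i)| := khinchine n (coefC b j)
      _ ≤ ∑ σ : Fin n → Bool, (|b.coord j (v σ)| + |b.coord j (v (fl σ))|) :=
          Finset.sum_le_sum fun σ _ => habs σ
      _ = 2 * ∑ σ : Fin n → Bool, |b.coord j (v σ)| := hsplit.symm
  -- sum over j
  have hP : (0:ℝ) < 2 ^ n := by positivity
  have hnpos : (0:ℝ) < n := by exact_mod_cast hn
  have hsn : (0:ℝ) < Real.sqrt n := Real.sqrt_pos.2 hnpos
  have h3 : (0:ℝ) < Real.sqrt 3 := Real.sqrt_pos.2 (by norm_num)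
  have hsum1 : (2:ℝ) * n ≤ ∑ j, ∑ i, |coefC b j i| := by
    rw [Finset.sum_comm]
    calc (2:ℝ) * n = ∑ _i : Fin n, (2:ℝ) := by
          rw [Finset.sum_const, Finset.card_univ, Fintype.card_fin, nsmul_eq_mul]; ring
      _ ≤ ∑ i, ∑ j, |coefC b j i| := Finset.sum_le_sum fun i _ => two_le_sum_abs b hb i
  have hnorm : (2 * n) / Real.sqrt n ≤ ∑ j, Real.sqrt (∑ i, (coefC b j i)^2) := by
    calc (2 * (n:ℝ)) / Real.sqrt n ≤ (∑ j, ∑ i, |coefC b j i|) / Real.sqrt n := by gcongr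
      _ = ∑ j, (∑ i, |coefC b j i|) / Real.sqrt n := Finset.sum_div _ _ _
      _ ≤ ∑ j, Real.sqrt (∑ i, (coefC b j i)^2) :=
          Finset.sum_le_sum fun j _ => l1_le_sqrt_l2 _
  have hsum2 : ∑ j, (2:ℝ)^n * Real.sqrt (∑ i, (coefC b j i)^2) / Real.sqrt 3
      ≤ 2 * ((2:ℝ)^n * M) := by
    calc ∑ j, (2:ℝ)^n * Real.sqrt (∑ i, (coefC b j i)^2) / Real.sqrt 3
        ≤ ∑ j, 2 * ∑ σ : Fin n → Bool, |b.coord j (v σ)| := Finset.sum_le_sum fun j _ => hDj j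
      _ = 2 * ∑ σ : Fin n → Bool, ∑ j, |b.coord j (v σ)| := by
          rw [← Finset.mul_sum, Finset.sum_comm]
      _ ≤ 2 * ∑ _σ : Fin n → Bool, M := by
          have := Finset.sum_le_sum fun (σ : Fin n → Bool) (_ : σ ∈ Finset.univ) => hMle σ
          linarith
      _ = 2 * ((2:ℝ)^n * M) := by
          rw [Finset.sum_const, Finset.card_univ, Fintype.card_fun]
          simp [nsmul_eq_mul]
  have hlhs : (2:ℝ)^n * ((2 * n) / Real.sqrt n) / Real.sqrt 3
      ≤ ∑ j, (2:ℝ)^n * Real.sqrt (∑ i, (coefC b j i)^2) / Real.sqrt 3 := by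
    calc (2:ℝ)^n * ((2 * n) / Real.sqrt n) / Real.sqrt 3
        ≤ (2:ℝ)^n * (∑ j, Real.sqrt (∑ i, (coefC b j i)^2)) / Real.sqrt 3 := by gcongr
      _ = ∑ j, (2:ℝ)^n * Real.sqrt (∑ i, (coefC b j i)^2) / Real.sqrt 3 := by
          rw [Finset.mul_sum, Finset.sum_div]
  have hkey : (2:ℝ)^n * ((2 * n) / Real.sqrt n) / Real.sqrt 3 ≤ 2 * ((2:ℝ)^n * M) :=
    le_trans hlhs hsum2
  have hdn : (2 * (n:ℝ)) / Real.sqrt n = 2 * Real.sqrt n := by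
    rw [div_eq_iff hsn.ne', mul_assoc, Real.mul_self_sqrt hnpos.le]
  rw [hdn] at hkey
  rw [div_le_iff₀ h3] at hkey
  have := mul_le_mul_of_nonneg_right hkey (le_of_lt (inv_pos.2 (mul_pos (by norm_num : (0:ℝ)<2) hP)))
  rw [div_le_iff₀ h3]
  calc Real.sqrt n = (2:ℝ)^n * (2 * Real.sqrt n) * (2 * 2^n)⁻¹ := by field_simp
    _ ≤ 2 * (2^n * M) * Real.sqrt 3 * (2 * 2^n)⁻¹ := by gcongr
    _ = M * Real.sqrt 3 := by field_simp

theorem theta_cube_gt (n : ℕ) (hn : 1 ≤ n) :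
    theta n (Set.Icc (0 : Fin n → ℝ) 1) > Real.sqrt ((n : ℝ) - 1) / Real.exp 1 := by
  have hne : {r : ℝ | ∃ b : AffineBasis (Fin (n + 1)) ℝ (Fin n → ℝ),
      (∀ j, b j ∈ Set.Icc (0 : Fin n → ℝ) 1) ∧
      r = ⨆ x ∈ Set.Icc (0 : Fin n → ℝ) 1, ∑ j, |b.coord j x|}.Nonempty := by
    exact ⟨_, stdAffBasis n, stdAffBasis_mem n, rfl⟩
  have hlow : Real.sqrt n / Real.sqrt 3 ≤ theta n (Set.Icc (0 : Fin n → ℝ) 1) := by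
    apply le_csInf hne
    rintro r ⟨b, hb, rfl⟩
    exact main_lb n hn b hb
  have hnpos : (0:ℝ) < n := by exact_mod_cast hn
  have hsn : 0 < Real.sqrt n := Real.sqrt_pos.2 hnpos
  have hs3 : (0:ℝ) < Real.sqrt 3 := Real.sqrt_pos.2 (by norm_num)
  have h3lt : Real.sqrt 3 < Real.exp 1 := by
    have h := Real.sq_sqrt (by norm_num : (0:ℝ) ≤ 3)
    have hnn := Real.sqrt_nonneg 3
    have he := Real.exp_one_gt_d9
    nlinarith
  have hstep1 : Real.sqrt ((n:ℝ) - 1) / Real.exp 1 ≤ Real.sqrt n / Real.exp 1 := by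
    gcongr
    linarith
  have hstep2 : Real.sqrt n / Real.exp 1 < Real.sqrt n / Real.sqrt 3 :=
    div_lt_div_of_pos_left hsn hs3 h3lt
  calc Real.sqrt ((n:ℝ) - 1) / Real.exp 1 ≤ Real.sqrt n / Real.exp 1 := hstep1
    _ < Real.sqrt n / Real.sqrt 3 := hstep2
    _ ≤ _ := hlow
end

section
/- For every integer n ≥ 1, θ_n(Q_n) > (2√2/(3e)) · √n. -/
noncomputable section
namespace ThetaAux

def sg (b : Bool) : ℝ := if b then 1 else -1

lemma sg_sq (b : Bool) : sg b ^ 2 = 1 := by cases b <;> simp [sg]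

def Z {m : ℕ} (a : Fin m → ℝ) (σ : Fin m → Bool) : ℝ := ∑ i, a i * sg (σ i)

lemma Z_cons {m : ℕ} (a : Fin (m+1) → ℝ) (b : Bool) (σ : Fin m → Bool) :
    Z a (Fin.cons b σ) = a 0 * sg b + Z (fun i => a i.succ) σ := by
  simp [Z, Fin.sum_univ_succ]

lemma sum_split {m : ℕ} (F : (Fin (m+1) → Bool) → ℝ) :
    ∑ σ : Fin (m+1) → Bool, F σ = ∑ b : Bool, ∑ σ : Fin m → Bool, F (Fin.cons b σ) := by
  rw [← (Fintype.sum_equiv (Fin.consEquiv fun _ => Bool) _ (fun σ => F σ) (fun p => rfl)),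
    Fintype.sum_prod_type]
  rfl

lemma moment2 {m : ℕ} (a : Fin m → ℝ) :
    ∑ σ : Fin m → Bool, (Z a σ) ^ 2 = 2 ^ m * ∑ i, a i ^ 2 := by
  induction m with
  | zero => simp [Z]
  | succ m ih =>
    rw [sum_split (fun σ => (Z a σ)^2)]
    have e : ∀ (b : Bool) (σ : Fin m → Bool), (Z a (Fin.cons b σ))^2
        = (a 0)^2 * (sg b)^2 + (2 * (a 0)) * (sg b * Z (fun i => a i.succ) σ)
          + (Z (fun i => a i.succ) σ)^2 := by
      intro b σ; rw [Z_cons]; ring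
    simp only [e, Finset.sum_add_distrib, ← Finset.mul_sum, sg_sq, ← Finset.sum_mul]
    rw [ih (fun i => a i.succ)]
    simp [sg, Fin.sum_univ_succ]
    ring

end ThetaAux

namespace ThetaAux

lemma moment4 {m : ℕ} (a : Fin m → ℝ) :
    ∑ σ : Fin m → Bool, (Z a σ) ^ 4 ≤ 3 * 2 ^ m * (∑ i, a i ^ 2) ^ 2 := by
  induction m with
  | zero => simp [Z]
  | succ m ih =>
    rw [sum_split (fun σ => (Z a σ)^4)]
    set y := Z (fun i => a i.succ) with hy
    have e : ∀ (b : Bool) (σ : Fin m → Bool), (Z a (Fin.cons b σ))^4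
        = (a 0)^4 * ((sg b ^2)^2) + (4*(a 0)^3) * (sg b^2 * (sg b * y σ))
          + (6*(a 0)^2) * (sg b^2 * (y σ)^2) + (4*(a 0)) * (sg b * (y σ)^3) + (y σ)^4 := by
      intro b σ; rw [Z_cons a b σ, ← hy]; ring
    simp only [e, sg_sq, one_pow, mul_one, one_mul, Finset.sum_add_distrib, ← Finset.mul_sum]
    have hb : ∀ (c : ℝ), ∑ b : Bool, sg b * c = 0 := by intro c; simp [sg]
    simp only [← Finset.sum_mul, Finset.sum_const, Finset.card_univ, Fintype.card_fun]
    have h2 : ∑ σ : Fin m → Bool, (y σ)^2 = 2 ^ m * ∑ i : Fin m, a i.succ ^ 2 := moment2 _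
    have expand : (∑ i : Fin (m+1), a i ^ 2) = a 0 ^2 + ∑ i : Fin m, a i.succ ^ 2 :=
      Fin.sum_univ_succ _
    rw [expand]
    have hA : (0:ℝ) ≤ ∑ i : Fin m, a i.succ ^ 2 := Finset.sum_nonneg fun i _ => sq_nonneg _
    have h4 := ih (fun i => a i.succ)
    have hs : ∑ b : Bool, sg b = 0 := by simp [sg]
    rw [← hy] at h4
    rw [hs]
    simp only [Fintype.card_bool, Fintype.card_fin, smul_eq_mul, nsmul_eq_mul, zero_mul,
      mul_zero, add_zero, Nat.cast_ofNat]
    rw [h2]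
    have hp : (0:ℝ) < 2 ^ m := by positivity
    have hps : (2:ℝ) ^ (m+1) = 2 * 2 ^ m := by ring
    push_cast
    rw [hps]
    nlinarith [h4, hA, sq_nonneg (a 0), hp, mul_nonneg hp.le (sq_nonneg (a 0 ^ 2)),
      mul_nonneg (mul_nonneg hp.le (sq_nonneg (a 0))) hA]


end ThetaAux

namespace ThetaAux

lemma abs_cs1 {m : ℕ} (a : Fin m → ℝ) :
    (∑ σ : Fin m → Bool, (Z a σ)^2)^2
      ≤ (∑ σ : Fin m → Bool, |Z a σ|) * (∑ σ : Fin m → Bool, |Z a σ|^3) := by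
  have h := Finset.sum_mul_sq_le_sq_mul_sq Finset.univ
    (fun σ : Fin m → Bool => Real.sqrt |Z a σ|)
    (fun σ : Fin m → Bool => |Z a σ| * Real.sqrt |Z a σ|)
  have e1 : ∀ σ : Fin m → Bool,
      Real.sqrt |Z a σ| * (|Z a σ| * Real.sqrt |Z a σ|) = (Z a σ)^2 := by
    intro σ
    rw [show Real.sqrt |Z a σ| * (|Z a σ| * Real.sqrt |Z a σ|)
        = (Real.sqrt |Z a σ| * Real.sqrt |Z a σ|) * |Z a σ| by ring,
      Real.mul_self_sqrt (abs_nonneg _), ← abs_mul, abs_mul_self]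
    ring
  have e2 : ∀ σ : Fin m → Bool, (Real.sqrt |Z a σ|)^2 = |Z a σ| :=
    fun σ => Real.sq_sqrt (abs_nonneg _)
  have e3 : ∀ σ : Fin m → Bool, (|Z a σ| * Real.sqrt |Z a σ|)^2 = |Z a σ|^3 := by
    intro σ
    rw [mul_pow, Real.sq_sqrt (abs_nonneg _)]
    ring
  calc (∑ σ : Fin m → Bool, (Z a σ)^2)^2
      = (∑ σ : Fin m → Bool, Real.sqrt |Z a σ| * (|Z a σ| * Real.sqrt |Z a σ|))^2 := by
        congr 1; exact Finset.sum_congr rfl fun σ _ => (e1 σ).symm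
    _ ≤ (∑ σ : Fin m → Bool, (Real.sqrt |Z a σ|)^2)
        * (∑ σ : Fin m → Bool, (|Z a σ| * Real.sqrt |Z a σ|)^2) := h
    _ = (∑ σ : Fin m → Bool, |Z a σ|) * (∑ σ : Fin m → Bool, |Z a σ|^3) := by
        rw [Finset.sum_congr rfl fun σ _ => e2 σ, Finset.sum_congr rfl fun σ _ => e3 σ]

lemma abs_cs2 {m : ℕ} (a : Fin m → ℝ) :
    (∑ σ : Fin m → Bool, |Z a σ|^3)^2
      ≤ (∑ σ : Fin m → Bool, (Z a σ)^2) * (∑ σ : Fin m → Bool, (Z a σ)^4) := by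
  have h := Finset.sum_mul_sq_le_sq_mul_sq Finset.univ
    (fun σ : Fin m → Bool => |Z a σ|) (fun σ : Fin m → Bool => (Z a σ)^2)
  have e1 : ∀ σ : Fin m → Bool, |Z a σ| * (Z a σ)^2 = |Z a σ|^3 := by
    intro σ; rw [← sq_abs (Z a σ)]; ring
  have e2 : ∀ σ : Fin m → Bool, |Z a σ|^2 = (Z a σ)^2 := fun σ => sq_abs _
  have e3 : ∀ σ : Fin m → Bool, ((Z a σ)^2)^2 = (Z a σ)^4 := by intro σ; ring
  calc (∑ σ : Fin m → Bool, |Z a σ|^3)^2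
      = (∑ σ : Fin m → Bool, |Z a σ| * (Z a σ)^2)^2 := by
        congr 1; exact Finset.sum_congr rfl fun σ _ => (e1 σ).symm
    _ ≤ (∑ σ : Fin m → Bool, |Z a σ|^2) * (∑ σ : Fin m → Bool, ((Z a σ)^2)^2) := h
    _ = (∑ σ : Fin m → Bool, (Z a σ)^2) * (∑ σ : Fin m → Bool, (Z a σ)^4) := by
        rw [Finset.sum_congr rfl fun σ _ => e2 σ, Finset.sum_congr rfl fun σ _ => e3 σ]

end ThetaAux

namespace ThetaAux

lemma khintchine {m : ℕ} (a : Fin m → ℝ) :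
    2 ^ m * Real.sqrt ((∑ i, a i ^ 2) / 3) ≤ ∑ σ : Fin m → Bool, |Z a σ| := by
  set A := ∑ i, a i ^ 2 with hA
  have hA0 : 0 ≤ A := Finset.sum_nonneg fun i _ => sq_nonneg _
  set P := ∑ σ : Fin m → Bool, |Z a σ| with hP
  have hP0 : 0 ≤ P := Finset.sum_nonneg fun σ _ => abs_nonneg _
  rcases eq_or_lt_of_le hA0 with h0 | hApos
  · rw [← h0]
    simpa using hP0
  · set N := (2:ℝ) ^ m with hN
    have hNpos : 0 < N := by positivity
    set Q := ∑ σ : Fin m → Bool, (Z a σ)^2 with hQ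
    set R := ∑ σ : Fin m → Bool, (Z a σ)^4 with hR
    set T := ∑ σ : Fin m → Bool, |Z a σ|^3 with hT
    have hQe : Q = N * A := moment2 a
    have hRe : R ≤ 3 * N * A ^ 2 := moment4 a
    have hT0 : 0 ≤ T := Finset.sum_nonneg fun σ _ => pow_nonneg (abs_nonneg _) 3
    have hR0 : 0 ≤ R := Finset.sum_nonneg fun σ _ => by positivity
    have hQpos : 0 < Q := by rw [hQe]; exact mul_pos hNpos hApos
    have h1 : Q^2 ≤ P * T := abs_cs1 a
    have h2 : T^2 ≤ Q * R := abs_cs2 a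
    have h3 : Q^4 ≤ P^2 * (Q * R) := by
      calc Q^4 = (Q^2)^2 := by ring
        _ ≤ (P*T)^2 := by
            apply pow_le_pow_left₀ (sq_nonneg Q) h1
        _ = P^2 * T^2 := by ring
        _ ≤ P^2 * (Q*R) := mul_le_mul_of_nonneg_left h2 (sq_nonneg P)
    have h4 : Q^3 ≤ P^2 * R := by
      have := (mul_le_mul_iff_of_pos_right hQpos).mpr (le_refl (Q^3))
      have h3' : Q^3 * Q ≤ (P^2 * R) * Q := by
        calc Q^3 * Q = Q^4 := by ring
          _ ≤ P^2 * (Q*R) := h3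
          _ = (P^2 * R) * Q := by ring
      exact le_of_mul_le_mul_right h3' hQpos
    have h5 : N^3 * A^3 ≤ P^2 * (3 * N * A^2) := by
      calc N^3 * A^3 = Q^3 := by rw [hQe]; ring
        _ ≤ P^2 * R := h4
        _ ≤ P^2 * (3 * N * A^2) := mul_le_mul_of_nonneg_left hRe (sq_nonneg P)
    have h6 : N^2 * (A/3) ≤ P^2 := by
      have hNA : 0 < N * A^2 := mul_pos hNpos (pow_pos hApos 2)
      have : (N^2 * (A/3)) * (3 * (N * A^2)) ≤ P^2 * (3 * (N * A^2)) := by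
        calc (N^2 * (A/3)) * (3 * (N * A^2)) = N^3 * A^3 := by ring
          _ ≤ P^2 * (3 * N * A^2) := h5
          _ = P^2 * (3 * (N * A^2)) := by ring
      exact le_of_mul_le_mul_right this (by linarith)
    have : N * Real.sqrt (A/3) = Real.sqrt (N^2 * (A/3)) := by
      rw [Real.sqrt_mul (sq_nonneg N), Real.sqrt_sq hNpos.le]
    rw [this]
    calc Real.sqrt (N^2 * (A/3)) ≤ Real.sqrt (P^2) := Real.sqrt_le_sqrt h6
      _ = P := Real.sqrt_sq hP0

lemma sym {m : ℕ} (c : ℝ) (a : Fin m → ℝ) :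
    ∑ σ : Fin m → Bool, |Z a σ| ≤ ∑ σ : Fin m → Bool, |c + Z a σ| := by
  have hZneg : ∀ σ : Fin m → Bool, Z a (fun i => !σ i) = - Z a σ := by
    intro σ
    simp only [Z, ← Finset.sum_neg_distrib]
    refine Finset.sum_congr rfl fun i _ => ?_
    cases h : σ i <;> simp [h, sg]
  have hflip : ∑ σ : Fin m → Bool, |c + Z a σ| = ∑ σ : Fin m → Bool, |c - Z a σ| := by
    refine Fintype.sum_equiv
      ⟨fun σ i => !σ i, fun σ i => !σ i, fun σ => by funext i; simp, fun σ => by funext i; simp⟩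
      _ _ fun σ => ?_
    show |c + Z a σ| = |c - Z a (fun i => !σ i)|
    rw [hZneg σ]; ring_nf
  have key : ∀ σ : Fin m → Bool, 2 * |Z a σ| ≤ |c + Z a σ| + |c - Z a σ| := by
    intro σ
    have := abs_sub (c + Z a σ) (c - Z a σ)
    calc 2 * |Z a σ| = |(c + Z a σ) - (c - Z a σ)| := by
          rw [show (c + Z a σ) - (c - Z a σ) = 2 * Z a σ by ring, abs_mul]
          norm_num
      _ ≤ |c + Z a σ| + |c - Z a σ| := abs_sub _ _
  have h2 : 2 * ∑ σ : Fin m → Bool, |Z a σ| ≤ 2 * ∑ σ : Fin m → Bool, |c + Z a σ| := by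
    calc 2 * ∑ σ : Fin m → Bool, |Z a σ| = ∑ σ : Fin m → Bool, 2 * |Z a σ| := by
          rw [Finset.mul_sum]
      _ ≤ ∑ σ : Fin m → Bool, (|c + Z a σ| + |c - Z a σ|) :=
          Finset.sum_le_sum fun σ _ => key σ
      _ = (∑ σ : Fin m → Bool, |c + Z a σ|) + ∑ σ : Fin m → Bool, |c - Z a σ| :=
          Finset.sum_add_distrib
      _ = 2 * ∑ σ : Fin m → Bool, |c + Z a σ| := by rw [← hflip]; ring
  linarith

end ThetaAux

namespace ThetaAux

lemma avg_abs {m : ℕ} (c : ℝ) (a : Fin m → ℝ) :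
    2 ^ m * Real.sqrt ((∑ i, a i ^ 2) / 12)
      ≤ ∑ σ : Fin m → Bool, |c + ∑ i, (if σ i then a i else 0)| := by
  have hrw : ∀ σ : Fin m → Bool,
      c + ∑ i, (if σ i then a i else 0)
        = (c + ∑ i, a i / 2) + Z (fun i => a i / 2) σ := by
    intro σ
    rw [Z, add_assoc, ← Finset.sum_add_distrib]
    congr 1
    refine Finset.sum_congr rfl fun i _ => ?_
    cases h : σ i <;> simp [h, sg] <;> ring
  have h12 : (∑ i, (fun i => a i / 2) i ^ 2) / 3 = (∑ i, a i ^ 2) / 12 := by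
    rw [show (∑ i, (fun i => a i / 2) i ^ 2) = (∑ i, a i ^ 2) / 4 by
      rw [Finset.sum_div]; exact Finset.sum_congr rfl fun i _ => by ring]
    ring
  calc 2 ^ m * Real.sqrt ((∑ i, a i ^ 2) / 12)
      = 2 ^ m * Real.sqrt ((∑ i, (fun i => a i / 2) i ^ 2) / 3) := by rw [h12]
    _ ≤ ∑ σ : Fin m → Bool, |Z (fun i => a i / 2) σ| := khintchine _
    _ ≤ ∑ σ : Fin m → Bool, |(c + ∑ i, a i / 2) + Z (fun i => a i / 2) σ| := sym _ _
    _ = ∑ σ : Fin m → Bool, |c + ∑ i, (if σ i then a i else 0)| :=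
        Finset.sum_congr rfl fun σ _ => by rw [hrw σ]

end ThetaAux

namespace ThetaAux

lemma pairsum {N : ℕ} (x : Fin N → ℝ) (h0 : ∀ j, 0 ≤ x j) (h1 : ∀ j, x j ≤ 1) :
    ∑ j, ∑ k, (x j - x k)^2 ≤ (N:ℝ)^2 / 2 := by
  set s := ∑ j, x j with hs
  set q := ∑ j, x j^2 with hq
  have hrow : ∀ j, ∑ k, (x j - x k)^2 = N * x j^2 - 2 * x j * s + q := by
    intro j
    have : ∀ k, (x j - x k)^2 = x j^2 - 2 * x j * x k + x k^2 := fun k => by ring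
    simp only [this, Finset.sum_add_distrib, Finset.sum_sub_distrib, ← Finset.mul_sum,
      Finset.sum_const, Finset.card_univ, Fintype.card_fin, nsmul_eq_mul, ← hs, ← hq]
  simp only [hrow, Finset.sum_add_distrib, Finset.sum_sub_distrib, ← Finset.mul_sum,
    Finset.sum_const, Finset.card_univ, Fintype.card_fin, nsmul_eq_mul, ← hs, ← hq]
  have hqs : q ≤ s := Finset.sum_le_sum fun j _ => by nlinarith [h0 j, h1 j]
  have hq0 : 0 ≤ q := Finset.sum_nonneg fun j _ => sq_nonneg _
  have hsn : s ≤ N := by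
    rw [hs]
    calc ∑ j, x j ≤ ∑ _j : Fin N, (1:ℝ) := Finset.sum_le_sum fun j _ => h1 j
      _ = N := by simp
  have hs0 : 0 ≤ s := Finset.sum_nonneg fun j _ => h0 j
  have hsum2 : ∑ j : Fin N, 2 * x j * s = 2 * (s * s) := by
    calc ∑ j : Fin N, 2 * x j * s = ∑ j : Fin N, x j * (2 * s) :=
          Finset.sum_congr rfl fun j _ => by ring
      _ = (∑ j : Fin N, x j) * (2 * s) := by rw [Finset.sum_mul]
      _ = 2 * (s * s) := by rw [← hs]; ring
  rw [hsum2]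
  nlinarith [sq_nonneg (2*s - N), mul_le_mul_of_nonneg_left hqs (by positivity : (0:ℝ) ≤ (N:ℝ))]

end ThetaAux

namespace ThetaAux

lemma main_lb {n : ℕ} (hn : 1 ≤ n) (b : AffineBasis (Fin (n+1)) ℝ (Fin n → ℝ))
    (hb : ∀ j, b j ∈ Set.Icc (0 : Fin n → ℝ) 1) :
    Real.sqrt ((n:ℝ)+1) / Real.sqrt 6
      ≤ ⨆ x ∈ Set.Icc (0 : Fin n → ℝ) 1, ∑ j, |b.coord j x| := by
  classical
  set K : Set (Fin n → ℝ) := Set.Icc 0 1 with hK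
  have memK : ∀ v : Fin n → ℝ, v ∈ K ↔ (∀ i, 0 ≤ v i) ∧ (∀ i, v i ≤ 1) := by
    intro v
    constructor
    · rintro ⟨h1, h2⟩; exact ⟨fun i => h1 i, fun i => h2 i⟩
    · rintro ⟨h1, h2⟩; exact ⟨fun i => h1 i, fun i => h2 i⟩
  set F : (Fin n → ℝ) → ℝ := fun v => ∑ j, |b.coord j v| with hF
  set r : ℝ := ⨆ x ∈ K, F x with hr
  -- affine decomposition
  set av : Fin (n+1) → Fin n → ℝ :=
    fun j i => (b.coord j).linear (fun k => if i = k then 1 else 0) with hav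
  set cc : Fin (n+1) → ℝ := fun j => b.coord j 0 with hcc
  have hcoord : ∀ j (v : Fin n → ℝ), b.coord j v = cc j + ∑ i, v i * av j i := by
    intro j v
    have hd := congrFun (AffineMap.decomp (b.coord j)) v
    simp only [Pi.add_apply] at hd
    rw [hd, LinearMap.pi_apply_eq_sum_univ (b.coord j).linear v]
    simp only [smul_eq_mul, hav, hcc]
    ring
  -- vertices
  set vx : (Fin n → Bool) → (Fin n → ℝ) := fun σ i => if σ i then 1 else 0 with hvx
  have hvxK : ∀ σ, vx σ ∈ K := by
    intro σ
    rw [memK]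
    constructor <;> intro i <;> by_cases h : σ i <;> simp [hvx, h]
  have hvertex : ∀ j σ, b.coord j (vx σ) = cc j + ∑ i, (if σ i then av j i else 0) := by
    intro j σ
    rw [hcoord j (vx σ)]
    congr 1
    refine Finset.sum_congr rfl fun i _ => ?_
    by_cases h : σ i <;> simp [hvx, h]
  -- the quantities
  set α : Fin (n+1) → ℝ := fun j => ∑ i, av j i ^ 2 with hα
  set D : Fin (n+1) → Fin (n+1) → ℝ := fun j k => ∑ i, (b j i - b k i)^2 with hD
  have hα0 : ∀ j, 0 ≤ α j := fun j => Finset.sum_nonneg fun i _ => sq_nonneg _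
  have hD0 : ∀ j k, 0 ≤ D j k := fun j k => Finset.sum_nonneg fun i _ => sq_nonneg _
  have hCS : ∀ j k, j ≠ k → 1 ≤ α j * D j k := by
    intro j k hjk
    have h1 : b.coord j (b j) = 1 := b.coord_apply_eq j
    have h0 : b.coord j (b k) = 0 := b.coord_apply_ne hjk
    have hdiff : ∑ i, (b j i - b k i) * av j i = 1 := by
      have e1 := hcoord j (b j)
      have e2 := hcoord j (b k)
      rw [h1] at e1; rw [h0] at e2
      have : ∑ i, (b j i - b k i) * av j i
          = (∑ i, b j i * av j i) - ∑ i, b k i * av j i := by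
        rw [← Finset.sum_sub_distrib]
        exact Finset.sum_congr rfl fun i _ => by ring
      rw [this]
      linarith
    have := Finset.sum_mul_sq_le_sq_mul_sq Finset.univ
      (fun i => b j i - b k i) (fun i => av j i)
    rw [hdiff] at this
    calc (1:ℝ) = 1^2 := by norm_num
      _ ≤ (∑ i, (b j i - b k i)^2) * ∑ i, av j i ^2 := this
      _ = α j * D j k := by rw [hα, hD]; ring
  -- average distances
  set M : Fin (n+1) → ℝ := fun j => (∑ k, D j k) / n with hM
  have hn0 : (0:ℝ) < n := by exact_mod_cast hn
  have hMle : ∀ j, 1 ≤ α j * M j := by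
    intro j
    obtain ⟨k, hk, hkle⟩ : ∃ k ∈ Finset.univ.erase j, D j k ≤ M j := by
      apply Finset.exists_le_of_sum_le
      · rw [← Finset.card_pos, Finset.card_erase_of_mem (Finset.mem_univ j),
          Finset.card_univ, Fintype.card_fin]
        omega
      · have hDjj : D j j = 0 := by simp [hD]
        have hsum : ∑ k ∈ Finset.univ.erase j, D j k = ∑ k, D j k :=
          Finset.sum_erase _ hDjj
        have hcard : (Finset.univ.erase j).card = n := by
          rw [Finset.card_erase_of_mem (Finset.mem_univ j), Finset.card_univ,
            Fintype.card_fin]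
          omega
        rw [hsum, Finset.sum_const, hcard, nsmul_eq_mul, hM]
        field_simp
        exact le_rfl
    have hkj : k ≠ j := Finset.ne_of_mem_erase hk
    calc (1:ℝ) ≤ α j * D j k := hCS j k (Ne.symm hkj)
      _ ≤ α j * M j := mul_le_mul_of_nonneg_left hkle (hα0 j)
  have hMpos : ∀ j, 0 < M j := by
    intro j
    by_contra h
    push_neg at h
    have : α j * M j ≤ 0 := mul_nonpos_of_nonneg_of_nonpos (hα0 j) h
    linarith [hMle j]
  set w : Fin (n+1) → ℝ := fun j => Real.sqrt (M j) with hw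
  have hwpos : ∀ j, 0 < w j := fun j => Real.sqrt_pos.mpr (hMpos j)
  have hsa : ∀ j, 1 / w j ≤ Real.sqrt (α j) := by
    intro j
    rw [Real.le_sqrt (by positivity) (hα0 j), div_pow, one_pow, Real.sq_sqrt (hMpos j).le,
      div_le_iff₀ (hMpos j)]
    linarith [hMle j]
  have CSa : ((n:ℝ)+1)^2 ≤ (∑ j, w j) * (∑ j, 1 / w j) := by
    have h := Finset.sum_mul_sq_le_sq_mul_sq Finset.univ
      (fun j : Fin (n+1) => Real.sqrt (w j)) (fun j : Fin (n+1) => 1 / Real.sqrt (w j))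
    have e1 : ∀ j : Fin (n+1), Real.sqrt (w j) * (1 / Real.sqrt (w j)) = 1 := by
      intro j
      have : Real.sqrt (w j) ≠ 0 := (Real.sqrt_pos.mpr (hwpos j)).ne'
      field_simp
    have e2 : ∀ j : Fin (n+1), Real.sqrt (w j) ^ 2 = w j :=
      fun j => Real.sq_sqrt (hwpos j).le
    have e3 : ∀ j : Fin (n+1), (1 / Real.sqrt (w j)) ^ 2 = 1 / w j := by
      intro j; rw [div_pow, one_pow, Real.sq_sqrt (hwpos j).le]
    rw [Finset.sum_congr rfl fun j _ => e1 j, Finset.sum_congr rfl fun j _ => e2 j,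
      Finset.sum_congr rfl fun j _ => e3 j] at h
    simpa using h
  have CSb : (∑ j, w j)^2 ≤ ((n:ℝ)+1) * ∑ j, M j := by
    have h := Finset.sum_mul_sq_le_sq_mul_sq Finset.univ
      (fun _ : Fin (n+1) => (1:ℝ)) (fun j : Fin (n+1) => w j)
    have e2 : ∀ j : Fin (n+1), w j ^ 2 = M j := fun j => Real.sq_sqrt (hMpos j).le
    rw [Finset.sum_congr rfl fun j _ => e2 j] at h
    simpa using h
  have hMsum : ∑ j, M j ≤ ((n:ℝ)+1)^2 / 2 := by
    have hswap : ∑ j, ∑ k, D j k ≤ (n:ℝ) * ((n:ℝ)+1)^2 / 2 := by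
      rw [show (∑ j, ∑ k, D j k) = ∑ i : Fin n, ∑ j : Fin (n+1), ∑ k : Fin (n+1),
          (b j i - b k i)^2 by
        simp only [hD]
        rw [show (∑ j : Fin (n+1), ∑ k : Fin (n+1), ∑ i : Fin n, (b j i - b k i)^2)
            = ∑ j : Fin (n+1), ∑ i : Fin n, ∑ k : Fin (n+1), (b j i - b k i)^2 from
          Finset.sum_congr rfl fun j _ => Finset.sum_comm]
        exact Finset.sum_comm]
      calc ∑ i : Fin n, ∑ j : Fin (n+1), ∑ k : Fin (n+1), (b j i - b k i)^2
          ≤ ∑ _i : Fin n, (((n:ℝ)+1)^2/2) := by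
            refine Finset.sum_le_sum fun i _ => ?_
            have := pairsum (N := n+1) (fun j => b j i)
              (fun j => ((memK (b j)).mp (hb j)).1 i) (fun j => ((memK (b j)).mp (hb j)).2 i)
            simpa using this
        _ = (n:ℝ) * ((n:ℝ)+1)^2 / 2 := by
            rw [Finset.sum_const, Finset.card_univ, Fintype.card_fin, nsmul_eq_mul]
            ring
    have : ∑ j, M j = (∑ j, ∑ k, D j k) / n := by
      rw [hM, ← Finset.sum_div]
    rw [this, div_le_iff₀ hn0]
    calc ∑ j, ∑ k, D j k ≤ (n:ℝ) * ((n:ℝ)+1)^2 / 2 := hswap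
      _ = ((n:ℝ)+1)^2/2 * n := by ring
  -- the sup dominates values on K
  set C0 : ℝ := ∑ j, (|cc j| + ∑ i, |av j i|) with hC0
  have hFle : ∀ v ∈ K, F v ≤ C0 := by
    intro v hv
    rw [hF, hC0]
    refine Finset.sum_le_sum fun j _ => ?_
    rw [hcoord j v]
    calc |cc j + ∑ i, v i * av j i| ≤ |cc j| + |∑ i, v i * av j i| := abs_add_le _ _
      _ ≤ |cc j| + ∑ i, |v i * av j i| := by
          gcongr
          exact Finset.abs_sum_le_sum_abs _ _
      _ ≤ |cc j| + ∑ i, |av j i| := by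
          refine add_le_add_right (Finset.sum_le_sum fun i _ => ?_) _
          rw [abs_mul]
          have h1 : |v i| ≤ 1 := by
            rw [abs_le]
            exact ⟨by linarith [((memK v).mp hv).1 i], ((memK v).mp hv).2 i⟩
          nlinarith [abs_nonneg (av j i), abs_nonneg (v i)]
  have hbdd : BddAbove (Set.range fun v => ⨆ _ : v ∈ K, F v) := by
    refine ⟨max C0 0, ?_⟩
    rintro _ ⟨v, rfl⟩
    by_cases h : v ∈ K
    · show (⨆ _ : v ∈ K, F v) ≤ max C0 0
      rw [ciSup_pos h]
      exact le_max_of_le_left (hFle v h)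
    · show (⨆ _ : v ∈ K, F v) ≤ max C0 0
      haveI : IsEmpty (v ∈ K) := ⟨fun hv => h hv⟩
      rw [Real.iSup_of_isEmpty]
      exact le_max_right _ _
  have hler : ∀ v ∈ K, F v ≤ r := by
    intro v hv
    rw [hr]
    have h1 : (⨆ _ : v ∈ K, F v) ≤ ⨆ x ∈ K, F x := le_ciSup hbdd v
    rwa [ciSup_pos hv] at h1
  -- average over vertices
  have havg : (2:ℝ)^n * ∑ j, Real.sqrt (α j / 12) ≤ (2:ℝ)^n * r := by
    have hswap : ∑ σ : Fin n → Bool, F (vx σ)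
        = ∑ j, ∑ σ : Fin n → Bool, |cc j + ∑ i, (if σ i then av j i else 0)| := by
      rw [hF, Finset.sum_comm]
      exact Finset.sum_congr rfl fun j _ => Finset.sum_congr rfl fun σ _ => by
        rw [hvertex j σ]
    have h1 : (2:ℝ)^n * ∑ j, Real.sqrt (α j / 12) ≤ ∑ σ : Fin n → Bool, F (vx σ) := by
      rw [hswap, Finset.mul_sum]
      refine Finset.sum_le_sum fun j _ => ?_
      exact avg_abs (cc j) (fun i => av j i)
    have h2 : ∑ σ : Fin n → Bool, F (vx σ) ≤ (2:ℝ)^n * r := by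
      calc ∑ σ : Fin n → Bool, F (vx σ) ≤ ∑ _σ : Fin n → Bool, r :=
            Finset.sum_le_sum fun σ _ => hler _ (hvxK σ)
        _ = (2:ℝ)^n * r := by
            rw [Finset.sum_const, Finset.card_univ, nsmul_eq_mul]
            congr 1
            simp [Fintype.card_fun]
    linarith
  have hTr : ∑ j, Real.sqrt (α j / 12) ≤ r :=
    le_of_mul_le_mul_left havg (by positivity)
  -- final chain
  set W : ℝ := ∑ j, w j with hW
  have hWpos : 0 < W := Finset.sum_pos (fun j _ => hwpos j) ⟨0, Finset.mem_univ 0⟩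
  have hW2 : W^2 ≤ (((n:ℝ)+1)^3)/2 := by
    calc W^2 ≤ ((n:ℝ)+1) * ∑ j, M j := CSb
      _ ≤ ((n:ℝ)+1) * (((n:ℝ)+1)^2/2) := by
          have hn1 : (0:ℝ) ≤ (n:ℝ)+1 := by positivity
          exact mul_le_mul_of_nonneg_left hMsum hn1
      _ = (((n:ℝ)+1)^3)/2 := by ring
  have hWle : W ≤ Real.sqrt ((((n:ℝ)+1)^3)/2) :=
    (Real.le_sqrt hWpos.le (by positivity)).mpr hW2
  have hprod : Real.sqrt ((n:ℝ)+1) * Real.sqrt 12 * Real.sqrt ((((n:ℝ)+1)^3)/2)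
      = (((n:ℝ)+1)^2) * Real.sqrt 6 := by
    rw [← Real.sqrt_mul (by positivity : (0:ℝ) ≤ (n:ℝ)+1) 12,
      ← Real.sqrt_mul (by positivity) _,
      show ((n:ℝ)+1) * 12 * ((((n:ℝ)+1)^3)/2) = (((n:ℝ)+1)^2)^2 * 6 by ring,
      Real.sqrt_mul (by positivity) 6, Real.sqrt_sq (by positivity)]
  have hfrac : Real.sqrt ((n:ℝ)+1)/Real.sqrt 6 ≤ ((((n:ℝ)+1)^2) / W) / Real.sqrt 12 := by
    rw [div_le_div_iff₀ (by positivity) (by positivity), div_mul_eq_mul_div,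
      le_div_iff₀ hWpos]
    calc Real.sqrt ((n:ℝ)+1) * Real.sqrt 12 * W
        ≤ Real.sqrt ((n:ℝ)+1) * Real.sqrt 12 * Real.sqrt ((((n:ℝ)+1)^3)/2) := by
          have : (0:ℝ) ≤ Real.sqrt ((n:ℝ)+1) * Real.sqrt 12 := by positivity
          exact mul_le_mul_of_nonneg_left hWle this
      _ = (((n:ℝ)+1)^2) * Real.sqrt 6 := hprod
  have h2 : ((((n:ℝ)+1)^2) / W) / Real.sqrt 12 ≤ (∑ j, 1 / w j) / Real.sqrt 12 := by
    have : (((n:ℝ)+1)^2) / W ≤ ∑ j, 1 / w j := by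
      rw [div_le_iff₀ hWpos]
      calc (((n:ℝ)+1)^2) ≤ W * ∑ j, 1 / w j := CSa
        _ = (∑ j, 1 / w j) * W := by ring
    exact div_le_div_of_nonneg_right this (by positivity)
  have h3 : (∑ j, 1 / w j) / Real.sqrt 12 ≤ ∑ j, Real.sqrt (α j / 12) := by
    rw [Finset.sum_div]
    refine Finset.sum_le_sum fun j _ => ?_
    rw [Real.sqrt_div (hα0 j) 12]
    exact div_le_div_of_nonneg_right (hsa j) (by positivity)
  linarith

end ThetaAux

namespace ThetaAux

def stdP (n : ℕ) : Fin (n+1) → (Fin n → ℝ) := Fin.cons 0 (fun i => Pi.single i 1)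

lemma stdP_ind (n : ℕ) : AffineIndependent ℝ (stdP n) := by
  classical
  set p := stdP n with hp
  let e : Fin n ≃ {x : Fin (n+1) // x ≠ 0} :=
    ⟨fun i => ⟨i.succ, Fin.succ_ne_zero i⟩,
     fun x => x.1.pred x.2,
     fun i => by simp,
     fun x => Subtype.ext (Fin.succ_pred x.1 x.2)⟩
  rw [affineIndependent_iff_linearIndependent_vsub ℝ p 0]
  rw [← linearIndependent_equiv e]
  have heq : ((fun (i : {x : Fin (n+1) // x ≠ 0}) => p i.1 -ᵥ p 0) ∘ e)
      = ⇑(Pi.basisFun ℝ (Fin n)) := by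
    funext i
    show p i.succ -ᵥ p 0 = Pi.basisFun ℝ (Fin n) i
    simp only [hp, stdP, Fin.cons_succ, Fin.cons_zero, Pi.basisFun_apply, vsub_eq_sub, sub_zero]
  rw [heq]
  exact (Pi.basisFun ℝ (Fin n)).linearIndependent

noncomputable def stdAB (n : ℕ) : AffineBasis (Fin (n+1)) ℝ (Fin n → ℝ) :=
  ⟨stdP n, stdP_ind n, by
    rw [(stdP_ind n).affineSpan_eq_top_iff_card_eq_finrank_add_one]
    simp [Module.finrank_fin_fun]⟩

lemma stdAB_coe (n : ℕ) : ⇑(stdAB n) = stdP n := rfl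

lemma stdAB_mem (n : ℕ) (j : Fin (n+1)) : stdAB n j ∈ Set.Icc (0 : Fin n → ℝ) 1 := by
  classical
  rw [show stdAB n j = stdP n j from rfl]
  refine ⟨fun i => ?_, fun i => ?_⟩ <;>
  · induction j using Fin.cases with
    | zero => simp [stdP]
    | succ k =>
      simp only [stdP, Fin.cons_succ]
      by_cases h : k = i <;> simp [Pi.single_apply, h]

end ThetaAux

open MeasureTheory

theorem theta_cube_gt_sqrt (n : ℕ) (hn : 1 ≤ n) :
    theta n (Set.Icc (0 : Fin n → ℝ) 1)
      > (2 * Real.sqrt 2 / (3 * Real.exp 1)) * Real.sqrt n := by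
  classical
  set S := {r : ℝ | ∃ b : AffineBasis (Fin (n + 1)) ℝ (Fin n → ℝ),
    (∀ j, b j ∈ Set.Icc (0 : Fin n → ℝ) 1) ∧
      r = ⨆ x ∈ Set.Icc (0 : Fin n → ℝ) 1, ∑ j, |b.coord j x|} with hS
  have hth : theta n (Set.Icc (0 : Fin n → ℝ) 1) = sInf S := rfl
  have hne : S.Nonempty :=
    ⟨_, ThetaAux.stdAB n, fun j => ThetaAux.stdAB_mem n j, rfl⟩
  have hlb : ∀ r ∈ S, Real.sqrt ((n:ℝ)+1) / Real.sqrt 6 ≤ r := by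
    rintro r ⟨b, hbK, rfl⟩
    exact ThetaAux.main_lb hn b hbK
  have h1 : Real.sqrt ((n:ℝ)+1) / Real.sqrt 6 ≤ sInf S := le_csInf hne hlb
  have hsqrt2 : Real.sqrt 2 < 1.42 := by
    rw [Real.sqrt_lt' (by norm_num)]; norm_num
  have hsqrt6 : Real.sqrt 6 < 2.45 := by
    rw [Real.sqrt_lt' (by norm_num)]; norm_num
  have hsqrt6pos : (0:ℝ) < Real.sqrt 6 := Real.sqrt_pos.mpr (by norm_num)
  have he : (2.718:ℝ) < Real.exp 1 := by
    have := Real.exp_one_gt_d9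
    norm_num at this ⊢
    linarith
  have hC : 2 * Real.sqrt 2 / (3 * Real.exp 1) < 1 / Real.sqrt 6 := by
    rw [div_lt_div_iff₀ (by positivity) hsqrt6pos]
    nlinarith [Real.sqrt_nonneg 2, Real.sqrt_nonneg 6]
  have hnR : (0:ℝ) < n := by exact_mod_cast hn
  have hnpos : 0 < Real.sqrt n := Real.sqrt_pos.mpr hnR
  have hmono : Real.sqrt n < Real.sqrt ((n:ℝ)+1) :=
    Real.sqrt_lt_sqrt (by positivity) (by linarith)
  rw [gt_iff_lt, hth]
  calc (2 * Real.sqrt 2 / (3 * Real.exp 1)) * Real.sqrt n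
      < (1 / Real.sqrt 6) * Real.sqrt n := mul_lt_mul_of_pos_right hC hnpos
    _ ≤ (1 / Real.sqrt 6) * Real.sqrt ((n:ℝ)+1) := by
        have : (0:ℝ) ≤ 1 / Real.sqrt 6 := by positivity
        exact mul_le_mul_of_nonneg_left hmono.le this
    _ = Real.sqrt ((n:ℝ)+1) / Real.sqrt 6 := by ring
    _ ≤ sInf S := h1
end
end
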